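/- arXiv:0710.3464 — 5 statements merged into one kernel-verified Lean document; each statement's English description precedes it below -/
import Mathlib

section
/- Let (Q,P) be a symplectic family with a fixed point at the origin in adapted coordinates. Then there exist an open neighborhood of the origin in ℝ³ and a C^∞ function g(q,ε) defined near (0,0) with g(0,0)=0 and g_q(0,0)=g_ε(0,0)=0, such that in this neighborhood the equation Q(q,p,ε)=q holds if and only if p=g(q,ε); moreover the function ψ̃(q,ε) := P(q,g(q,ε),ε) − g(q,ε) has a critical point at (0,0) whose Hessian matrix at (0,0) equals [[P_qq, P_qε],[P_qε, P_εε]], the partial derivatives of P being evaluated at the origin. -/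
/-- Partial derivative with respect to the first variable `q`. -/
noncomputable def Dq (f : ℝ → ℝ → ℝ → ℝ) (q p e : ℝ) : ℝ := deriv (fun s => f s p e) q
/-- Partial derivative with respect to the second variable `p`. -/
noncomputable def Dp (f : ℝ → ℝ → ℝ → ℝ) (q p e : ℝ) : ℝ := deriv (fun s => f q s e) p
/-- Partial derivative with respect to the third variable `ε`. -/
noncomputable def De (f : ℝ → ℝ → ℝ → ℝ) (q p e : ℝ) : ℝ := deriv (fun s => f q p s) e

/-- Partial derivative of a function of two variables with respect to the first variable. -/
noncomputable def D1 (f : ℝ → ℝ → ℝ) (a b : ℝ) : ℝ := deriv (fun s => f s b) a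
/-- Partial derivative of a function of two variables with respect to the second variable. -/
noncomputable def D2 (f : ℝ → ℝ → ℝ) (a b : ℝ) : ℝ := deriv (fun s => f a s) b

/-- The function `ψ̃(q,ε) = P(q, g(q,ε), ε) − g(q,ε)`. -/
noncomputable def psiFun (P : ℝ → ℝ → ℝ → ℝ) (g : ℝ → ℝ → ℝ) : ℝ → ℝ → ℝ :=
  fun q e => P q (g q e) e - g q e

open Filter Topology ContinuousLinearMap

section Helpers

variable {M : Type*} [NormedAddCommGroup M] [NormedSpace ℝ M]

lemma hasDerivAt_comp3 {F : ℝ × ℝ × ℝ → M} {F' : ℝ × ℝ × ℝ →L[ℝ] M} {α β γ : ℝ → ℝ}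
    {a b c t : ℝ} (hF : HasFDerivAt F F' (α t, β t, γ t)) (hα : HasDerivAt α a t)
    (hβ : HasDerivAt β b t) (hγ : HasDerivAt γ c t) :
    HasDerivAt (fun s => F (α s, β s, γ s)) (F' (a, b, c)) t :=
  hF.comp_hasDerivAt t (hα.prodMk (hβ.prodMk hγ))

lemma hasDerivAt_comp2 {F : ℝ × ℝ → M} {F' : ℝ × ℝ →L[ℝ] M} {α β : ℝ → ℝ}
    {a b t : ℝ} (hF : HasFDerivAt F F' (α t, β t)) (hα : HasDerivAt α a t)
    (hβ : HasDerivAt β b t) :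
    HasDerivAt (fun s => F (α s, β s)) (F' (a, b)) t :=
  hF.comp_hasDerivAt t (hα.prodMk hβ)

lemma decomp3 (F' : ℝ × ℝ × ℝ →L[ℝ] M) (v : ℝ × ℝ × ℝ) :
    F' v = v.1 • F' (1, 0, 0) + v.2.1 • F' (0, 1, 0) + v.2.2 • F' (0, 0, 1) := by
  have hv : v = v.1 • ((1 : ℝ), (0 : ℝ), (0 : ℝ)) + v.2.1 • ((0 : ℝ), (1 : ℝ), (0 : ℝ))
      + v.2.2 • ((0 : ℝ), (0 : ℝ), (1 : ℝ)) := by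
    simp [Prod.ext_iff]
  conv_lhs => rw [hv]
  simp only [map_add, map_smul]

lemma hasDerivAt_mul_zero {u v : ℝ → ℝ} {u' v' t : ℝ} (hu : HasDerivAt u u' t)
    (hv : HasDerivAt v v' t) (h0 : u t = 0) (h0' : v t = 0) :
    HasDerivAt (fun s => u s * v s) 0 t := by
  exact (hu.mul hv).congr_deriv (by simp [h0, h0'])

end Helpers

noncomputable def shearEquiv (b : ℝ) (hb : b ≠ 0) : (ℝ × ℝ × ℝ) ≃L[ℝ] (ℝ × ℝ × ℝ) :=
  LinearEquiv.toContinuousLinearEquiv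
  { toFun := fun v => (v.1, v.1 + b * v.2.1, v.2.2)
    map_add' := by intro v w; simp [Prod.ext_iff]; ring
    map_smul' := by intro c v; simp [Prod.ext_iff]; ring
    invFun := fun v => (v.1, (v.2.1 - v.1) / b, v.2.2)
    left_inv := by intro v; simp [Prod.ext_iff]; field_simp
    right_inv := by intro v; simp [Prod.ext_iff]; field_simp; ring }

@[simp] lemma shearEquiv_apply (b : ℝ) (hb : b ≠ 0) (v : ℝ × ℝ × ℝ) :
    shearEquiv b hb v = (v.1, v.1 + b * v.2.1, v.2.2) := rfl


set_option maxHeartbeats 2000000 in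
/-- For a symplectic family with a fixed point at the origin in adapted coordinates, the
surface `X = {Q(q,p,ε) = q}` is locally the graph `p = g(q,ε)` of a smooth function `g`
which is critical at the origin, and the function `ψ̃(q,ε) = P(q,g(q,ε),ε) − g(q,ε)` has a
critical point at `(0,0)` with Hessian matrix `[[P_qq, P_qε],[P_qε, P_εε]]` (partial
derivatives of `P` evaluated at the origin). -/
theorem fixed_surface_graph_and_hessian
    (Q P : ℝ → ℝ → ℝ → ℝ) (U : Set (ℝ × ℝ × ℝ)) (hU : IsOpen U) (hU0 : (0, 0, 0) ∈ U)
    (hQ : ContDiffOn ℝ (⊤ : ℕ∞) (fun z : ℝ × ℝ × ℝ => Q z.1 z.2.1 z.2.2) U)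
    (hP : ContDiffOn ℝ (⊤ : ℕ∞) (fun z : ℝ × ℝ × ℝ => P z.1 z.2.1 z.2.2) U)
    (hsymp : ∀ z ∈ U, Dq Q z.1 z.2.1 z.2.2 * Dp P z.1 z.2.1 z.2.2
      - Dp Q z.1 z.2.1 z.2.2 * Dq P z.1 z.2.1 z.2.2 = 1)
    (hQ0 : Q 0 0 0 = 0) (hP0 : P 0 0 0 = 0)
    (hQq : Dq Q 0 0 0 = 1) (hPq : Dq P 0 0 0 = 0) (hPp : Dp P 0 0 0 = 1)
    (hQe : De Q 0 0 0 = 0) (hPe : De P 0 0 0 = 0) (hQp : Dp Q 0 0 0 ≠ 0) :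
    ∃ (V : Set (ℝ × ℝ × ℝ)) (W : Set (ℝ × ℝ)) (g : ℝ → ℝ → ℝ),
      IsOpen V ∧ (0, 0, 0) ∈ V ∧ V ⊆ U ∧ IsOpen W ∧ (0, 0) ∈ W ∧
      ContDiffOn ℝ (⊤ : ℕ∞) (fun w : ℝ × ℝ => g w.1 w.2) W ∧
      g 0 0 = 0 ∧ D1 g 0 0 = 0 ∧ D2 g 0 0 = 0 ∧
      (∀ z ∈ V, (z.1, z.2.2) ∈ W ∧ (Q z.1 z.2.1 z.2.2 = z.1 ↔ z.2.1 = g z.1 z.2.2)) ∧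
      D1 (psiFun P g) 0 0 = 0 ∧ D2 (psiFun P g) 0 0 = 0 ∧
      !![D1 (D1 (psiFun P g)) 0 0, D2 (D1 (psiFun P g)) 0 0;
         D1 (D2 (psiFun P g)) 0 0, D2 (D2 (psiFun P g)) 0 0]
        = !![Dq (Dq P) 0 0 0, De (Dq P) 0 0 0;
             De (Dq P) 0 0 0, De (De P) 0 0 0] := by
  classical
  set F0 : ℝ × ℝ × ℝ → ℝ := fun z => Q z.1 z.2.1 z.2.2 with hF0def
  set FP : ℝ × ℝ × ℝ → ℝ := fun z => P z.1 z.2.1 z.2.2 with hFPdef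
  have hQat : ContDiffAt ℝ (⊤ : ℕ∞) F0 (0, 0, 0) := hQ.contDiffAt (hU.mem_nhds hU0)
  have hPat : ContDiffAt ℝ (⊤ : ℕ∞) FP (0, 0, 0) := hP.contDiffAt (hU.mem_nhds hU0)
  have hQd : DifferentiableAt ℝ F0 (0, 0, 0) := hQat.differentiableAt (by simp)
  have hPd : DifferentiableAt ℝ FP (0, 0, 0) := hPat.differentiableAt (by simp)
  have hQ'fd : HasFDerivAt F0 (fderiv ℝ F0 (0, 0, 0)) (0, 0, 0) := hQd.hasFDerivAt
  have hP'fd : HasFDerivAt FP (fderiv ℝ FP (0, 0, 0)) (0, 0, 0) := hPd.hasFDerivAt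
  -- bridge first partials
  have hQ1 : fderiv ℝ F0 (0, 0, 0) (1, 0, 0) = 1 := by
    have h := (hasDerivAt_comp3 hQ'fd (hasDerivAt_id' (x := (0:ℝ)))
      (hasDerivAt_const 0 (0:ℝ)) (hasDerivAt_const 0 (0:ℝ))).deriv
    rw [← h]; exact hQq
  have hQ2 : fderiv ℝ F0 (0, 0, 0) (0, 1, 0) ≠ 0 := by
    have h := (hasDerivAt_comp3 hQ'fd (hasDerivAt_const 0 (0:ℝ))
      (hasDerivAt_id' (x := (0:ℝ))) (hasDerivAt_const 0 (0:ℝ))).deriv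
    rw [← h]; exact hQp
  have hQ3 : fderiv ℝ F0 (0, 0, 0) (0, 0, 1) = 0 := by
    have h := (hasDerivAt_comp3 hQ'fd (hasDerivAt_const 0 (0:ℝ))
      (hasDerivAt_const 0 (0:ℝ)) (hasDerivAt_id' (x := (0:ℝ)))).deriv
    rw [← h]; exact hQe
  have hP1 : fderiv ℝ FP (0, 0, 0) (1, 0, 0) = 0 := by
    have h := (hasDerivAt_comp3 hP'fd (hasDerivAt_id' (x := (0:ℝ)))
      (hasDerivAt_const 0 (0:ℝ)) (hasDerivAt_const 0 (0:ℝ))).deriv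
    rw [← h]; exact hPq
  have hP2 : fderiv ℝ FP (0, 0, 0) (0, 1, 0) = 1 := by
    have h := (hasDerivAt_comp3 hP'fd (hasDerivAt_const 0 (0:ℝ))
      (hasDerivAt_id' (x := (0:ℝ))) (hasDerivAt_const 0 (0:ℝ))).deriv
    rw [← h]; exact hPp
  have hP3 : fderiv ℝ FP (0, 0, 0) (0, 0, 1) = 0 := by
    have h := (hasDerivAt_comp3 hP'fd (hasDerivAt_const 0 (0:ℝ))
      (hasDerivAt_const 0 (0:ℝ)) (hasDerivAt_id' (x := (0:ℝ)))).deriv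
    rw [← h]; exact hPe
  -- the shear map Φ
  set Φ : ℝ × ℝ × ℝ → ℝ × ℝ × ℝ := fun z => (z.1, F0 z, z.2.2) with hΦdef
  set A := shearEquiv (fderiv ℝ F0 (0, 0, 0) (0, 1, 0)) hQ2 with hAdef
  have hΦat : ContDiffAt ℝ (⊤ : ℕ∞) Φ (0, 0, 0) :=
    (contDiff_fst.contDiffAt).prodMk (hQat.prodMk ((contDiff_snd.comp contDiff_snd).contDiffAt))
  have hΦfd : HasFDerivAt Φ (A : (ℝ × ℝ × ℝ) →L[ℝ] (ℝ × ℝ × ℝ)) (0, 0, 0) := by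
    have h1 : HasFDerivAt Φ ((ContinuousLinearMap.fst ℝ ℝ (ℝ × ℝ)).prod
        ((fderiv ℝ F0 (0, 0, 0)).prod ((ContinuousLinearMap.snd ℝ ℝ ℝ).comp
          (ContinuousLinearMap.snd ℝ ℝ (ℝ × ℝ))))) (0, 0, 0) :=
      (hasFDerivAt_fst).prodMk (hQ'fd.prodMk ((hasFDerivAt_snd).comp _ hasFDerivAt_snd))
    have heq : ((A : (ℝ × ℝ × ℝ) →L[ℝ] (ℝ × ℝ × ℝ))) = ((ContinuousLinearMap.fst ℝ ℝ (ℝ × ℝ)).prod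
        ((fderiv ℝ F0 (0, 0, 0)).prod ((ContinuousLinearMap.snd ℝ ℝ ℝ).comp
          (ContinuousLinearMap.snd ℝ ℝ (ℝ × ℝ))))) := by
      apply ContinuousLinearMap.ext
      intro v
      have hv := decomp3 (fderiv ℝ F0 (0, 0, 0)) v
      rw [hQ1, hQ3] at hv
      have : (fderiv ℝ F0 (0, 0, 0)) v = v.1 + (fderiv ℝ F0 (0, 0, 0)) (0, 1, 0) * v.2.1 := by
        rw [hv]; simp [smul_eq_mul]; ring
      simp only [hAdef, shearEquiv_apply, ContinuousLinearEquiv.coe_coe,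
        ContinuousLinearMap.prod_apply, ContinuousLinearMap.coe_fst',
        ContinuousLinearMap.coe_comp', ContinuousLinearMap.coe_snd', Function.comp_apply,
        Prod.mk.injEq, this]
    rw [heq]; exact h1
  have hS : HasStrictFDerivAt Φ (A : (ℝ × ℝ × ℝ) →L[ℝ] (ℝ × ℝ × ℝ)) (0, 0, 0) :=
    hΦat.hasStrictFDerivAt' hΦfd (by simp)
  set PH := hS.toOpenPartialHomeomorph Φ with hPHdef
  have hsrc : ((0, 0, 0) : ℝ × ℝ × ℝ) ∈ PH.source := hS.mem_toOpenPartialHomeomorph_source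
  have hΦ0 : Φ (0, 0, 0) = ((0, 0, 0) : ℝ × ℝ × ℝ) := by
    simp [hΦdef, hF0def, hQ0]
  have htgt : ((0, 0, 0) : ℝ × ℝ × ℝ) ∈ PH.target := by
    have := hS.image_mem_toOpenPartialHomeomorph_target
    rwa [hΦ0] at this
  have hcoe : ⇑PH = Φ := rfl
  have hsymm0 : PH.symm (0, 0, 0) = ((0, 0, 0) : ℝ × ℝ × ℝ) := by
    conv_lhs => rw [← hΦ0, ← hcoe]
    exact PH.left_inv hsrc
  set g : ℝ → ℝ → ℝ := fun q e => (PH.symm (q, q, e)).2.1 with hgdef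
  have g00 : g 0 0 = 0 := by
    show (PH.symm (0, 0, 0)).2.1 = 0
    rw [hsymm0]
  -- smoothness of the inverse
  have hσat : ContDiffAt ℝ (⊤ : ℕ∞) PH.symm (0, 0, 0) := by
    apply PH.contDiffAt_symm htgt (f₀' := A)
    · rw [hsymm0]; exact hΦfd
    · rw [hsymm0]; exact hΦat
  set G : ℝ × ℝ → ℝ := fun w => g w.1 w.2 with hGdef
  have hjc : ContDiff ℝ (⊤ : ℕ∞) (fun w : ℝ × ℝ => ((w.1, w.1, w.2) : ℝ × ℝ × ℝ)) :=
    contDiff_fst.prodMk (contDiff_fst.prodMk contDiff_snd)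
  have hGat : ContDiffAt ℝ (⊤ : ℕ∞) G (0, 0) := by
    have hcomp : ContDiffAt ℝ (⊤ : ℕ∞)
        (PH.symm ∘ (fun w : ℝ × ℝ => ((w.1, w.1, w.2) : ℝ × ℝ × ℝ))) (0, 0) :=
      ContDiffAt.comp (g := PH.symm)
        (f := fun w : ℝ × ℝ => ((w.1, w.1, w.2) : ℝ × ℝ × ℝ)) (0, 0) hσat hjc.contDiffAt
    have h2 : ContDiffAt ℝ (⊤ : ℕ∞) ((fun z : ℝ × ℝ × ℝ => z.2.1) ∘
        (PH.symm ∘ (fun w : ℝ × ℝ => ((w.1, w.1, w.2) : ℝ × ℝ × ℝ)))) (0, 0) :=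
      ((contDiff_fst.comp contDiff_snd).contDiffAt).comp (0, 0) hcomp
    exact h2
  -- the right-inverse identity
  have hjt : Tendsto (fun w : ℝ × ℝ => ((w.1, w.1, w.2) : ℝ × ℝ × ℝ)) (𝓝 (0, 0))
      (𝓝 (0, 0, 0)) := hjc.continuous.tendsto' (0, 0) (0, 0, 0) rfl
  have E1 : ∀ᶠ w : ℝ × ℝ in 𝓝 (0, 0),
      PH.symm (w.1, w.1, w.2) = ((w.1, g w.1 w.2, w.2) : ℝ × ℝ × ℝ) ∧
      Q w.1 (g w.1 w.2) w.2 = w.1 := by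
    filter_upwards [hjt.eventually (PH.eventually_right_inverse htgt)] with w hw
    have h1 : (PH.symm (w.1, w.1, w.2)).1 = w.1 := congrArg Prod.fst hw
    have h3 : (PH.symm (w.1, w.1, w.2)).2.2 = w.2 := congrArg (fun z : ℝ × ℝ × ℝ => z.2.2) hw
    have h2 : F0 (PH.symm (w.1, w.1, w.2)) = w.1 := congrArg (fun z : ℝ × ℝ × ℝ => z.2.1) hw
    have hsy : PH.symm (w.1, w.1, w.2) = ((w.1, g w.1 w.2, w.2) : ℝ × ℝ × ℝ) := by
      refine Prod.ext h1 (Prod.ext rfl h3)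
    refine ⟨hsy, ?_⟩
    rw [hsy] at h2
    exact h2
  -- first derivatives of g
  have hGd : DifferentiableAt ℝ G (0, 0) := hGat.differentiableAt (by simp)
  have hg1 : HasDerivAt (fun s => g s 0) (fderiv ℝ G (0, 0) (1, 0)) 0 :=
    hasDerivAt_comp2 hGd.hasFDerivAt (hasDerivAt_id' (x := (0:ℝ))) (hasDerivAt_const 0 (0:ℝ))
  have hg2 : HasDerivAt (fun t => g 0 t) (fderiv ℝ G (0, 0) (0, 1)) 0 :=
    hasDerivAt_comp2 hGd.hasFDerivAt (hasDerivAt_const 0 (0:ℝ)) (hasDerivAt_id' (x := (0:ℝ)))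
  have hQg0 : HasFDerivAt F0 (fderiv ℝ F0 (0, 0, 0)) ((0 : ℝ), g 0 0, (0 : ℝ)) := by
    rw [g00]; exact hQ'fd
  have hsq : Tendsto (fun s : ℝ => ((s, 0) : ℝ × ℝ)) (𝓝 0) (𝓝 (0, 0)) :=
    (continuous_id.prodMk continuous_const).tendsto' 0 (0, 0) rfl
  have hse : Tendsto (fun t : ℝ => ((0, t) : ℝ × ℝ)) (𝓝 0) (𝓝 (0, 0)) :=
    (continuous_const.prodMk continuous_id).tendsto' 0 (0, 0) rfl
  have hgq : fderiv ℝ G (0, 0) (1, 0) = 0 := by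
    have e1q : ∀ᶠ s in 𝓝 (0:ℝ), Q s (g s 0) 0 = s := by
      filter_upwards [hsq.eventually E1] with s hs using hs.2
    have hL : HasDerivAt (fun s => Q s (g s 0) 0)
        (fderiv ℝ F0 (0, 0, 0) (1, fderiv ℝ G (0, 0) (1, 0), 0)) 0 :=
      hasDerivAt_comp3 hQg0 (hasDerivAt_id' (x := (0:ℝ))) hg1 (hasDerivAt_const 0 (0:ℝ))
    have hL' : HasDerivAt (fun s : ℝ => s)
        (fderiv ℝ F0 (0, 0, 0) (1, fderiv ℝ G (0, 0) (1, 0), 0)) 0 :=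
      hL.congr_of_eventuallyEq (EventuallyEq.symm e1q)
    have huniq := hL'.unique (hasDerivAt_id' (x := (0:ℝ)))
    rw [decomp3, hQ1, hQ3] at huniq
    simp [smul_eq_mul] at huniq
    rcases huniq with h | h
    · exact h
    · exact absurd h hQ2
  have hge : fderiv ℝ G (0, 0) (0, 1) = 0 := by
    have e1e : ∀ᶠ t in 𝓝 (0:ℝ), Q 0 (g 0 t) t = 0 := by
      filter_upwards [hse.eventually E1] with t ht using ht.2
    have hL : HasDerivAt (fun t => Q 0 (g 0 t) t)
        (fderiv ℝ F0 (0, 0, 0) (0, fderiv ℝ G (0, 0) (0, 1), 1)) 0 :=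
      hasDerivAt_comp3 hQg0 (hasDerivAt_const 0 (0:ℝ)) hg2 (hasDerivAt_id' (x := (0:ℝ)))
    have hL' : HasDerivAt (fun _ : ℝ => (0:ℝ))
        (fderiv ℝ F0 (0, 0, 0) (0, fderiv ℝ G (0, 0) (0, 1), 1)) 0 :=
      hL.congr_of_eventuallyEq (EventuallyEq.symm e1e)
    have huniq := hL'.unique (hasDerivAt_const 0 (0:ℝ))
    rw [decomp3, hQ1, hQ3] at huniq
    simp [smul_eq_mul] at huniq
    rcases huniq with h | h
    · exact h
    · exact absurd h hQ2
  have hD1g : D1 g 0 0 = 0 := hg1.deriv.trans hgq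
  have hD2g : D2 g 0 0 = 0 := hg2.deriv.trans hge
  -- first derivatives of psi
  have hPg0 : HasFDerivAt FP (fderiv ℝ FP (0, 0, 0)) ((0 : ℝ), g 0 0, (0 : ℝ)) := by
    rw [g00]; exact hP'fd
  have hψ1 : HasDerivAt (fun s => psiFun P g s 0)
      (fderiv ℝ FP (0, 0, 0) (1, fderiv ℝ G (0, 0) (1, 0), 0) - fderiv ℝ G (0, 0) (1, 0)) 0 :=
    (hasDerivAt_comp3 (F := FP) hPg0 (hasDerivAt_id' (x := (0:ℝ))) hg1 (hasDerivAt_const 0 (0:ℝ))).sub hg1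
  have hψ2 : HasDerivAt (fun t => psiFun P g 0 t)
      (fderiv ℝ FP (0, 0, 0) (0, fderiv ℝ G (0, 0) (0, 1), 1) - fderiv ℝ G (0, 0) (0, 1)) 0 :=
    (hasDerivAt_comp3 (F := FP) hPg0 (hasDerivAt_const 0 (0:ℝ)) hg2 (hasDerivAt_id' (x := (0:ℝ)))).sub hg2
  have hDψ1 : D1 (psiFun P g) 0 0 = 0 := by
    have h := hψ1.deriv
    rw [hgq, hP1] at h
    simp at h; exact h
  have hDψ2 : D2 (psiFun P g) 0 0 = 0 := by
    have h := hψ2.deriv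
    rw [hge, hP3] at h
    simp at h; exact h
  -- second-order infrastructure
  have hPd2at : ContDiffAt ℝ (⊤ : ℕ∞) (fderiv ℝ FP) (0, 0, 0) := hPat.fderiv_right (by simp)
  have hSd : HasFDerivAt (fderiv ℝ FP) (fderiv ℝ (fderiv ℝ FP) (0, 0, 0)) (0, 0, 0) :=
    (hPd2at.differentiableAt (by simp)).hasFDerivAt
  have hGd2at : ContDiffAt ℝ (⊤ : ℕ∞) (fderiv ℝ G) (0, 0) := hGat.fderiv_right (by simp)
  have hSGd : HasFDerivAt (fderiv ℝ G) (fderiv ℝ (fderiv ℝ G) (0, 0)) (0, 0) :=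
    (hGd2at.differentiableAt (by simp)).hasFDerivAt
  have hFv : ∀ v : ℝ × ℝ × ℝ, HasFDerivAt (fun z => fderiv ℝ FP z v)
      ((ContinuousLinearMap.apply ℝ ℝ v).comp (fderiv ℝ (fderiv ℝ FP) (0, 0, 0))) (0, 0, 0) :=
    fun v => (ContinuousLinearMap.apply ℝ ℝ v).hasFDerivAt.comp (0, 0, 0) hSd
  have hGv : ∀ v : ℝ × ℝ, HasFDerivAt (fun w => fderiv ℝ G w v)
      ((ContinuousLinearMap.apply ℝ ℝ v).comp (fderiv ℝ (fderiv ℝ G) (0, 0))) (0, 0) :=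
    fun v => (ContinuousLinearMap.apply ℝ ℝ v).hasFDerivAt.comp (0, 0) hSGd
  have hPev : ∀ᶠ z in 𝓝 ((0, 0, 0) : ℝ × ℝ × ℝ), DifferentiableAt ℝ FP z := by
    filter_upwards [(hPat.of_le (m := 1) (by exact_mod_cast le_top)).eventually (by simp)] with z hz using hz.differentiableAt (by simp)
  have hGev : ∀ᶠ w in 𝓝 ((0, 0) : ℝ × ℝ), DifferentiableAt ℝ G w := by
    filter_upwards [(hGat.of_le (m := 1) (by exact_mod_cast le_top)).eventually (by simp)] with w hw using hw.differentiableAt (by simp)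
  have hΓt : Tendsto (fun w : ℝ × ℝ => ((w.1, g w.1 w.2, w.2) : ℝ × ℝ × ℝ)) (𝓝 (0, 0))
      (𝓝 (0, 0, 0)) := by
    have hca : ContinuousAt (fun w : ℝ × ℝ => ((w.1, g w.1 w.2, w.2) : ℝ × ℝ × ℝ)) (0, 0) :=
      continuousAt_fst.prodMk ((hGat.continuousAt).prodMk continuousAt_snd)
    have h := hca.tendsto
    have : ((0:ℝ), g 0 0, (0:ℝ)) = ((0, 0, 0) : ℝ × ℝ × ℝ) := by rw [g00]
    rwa [this] at h
  -- eventual formulas for the first partial derivatives of psi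
  have E2 : ∀ᶠ w : ℝ × ℝ in 𝓝 (0, 0), D1 (psiFun P g) w.1 w.2 =
      fderiv ℝ FP (w.1, g w.1 w.2, w.2) (1, 0, 0) +
      (fderiv ℝ FP (w.1, g w.1 w.2, w.2) (0, 1, 0) - 1) * fderiv ℝ G w (1, 0) := by
    filter_upwards [hGev, hΓt.eventually hPev] with w hGw hPw
    have hgw : HasDerivAt (fun s => g s w.2) (fderiv ℝ G w (1, 0)) w.1 :=
      hasDerivAt_comp2 hGw.hasFDerivAt (hasDerivAt_id' (x := w.1)) (hasDerivAt_const w.1 w.2)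
    have hmain : HasDerivAt (fun s => FP (s, g s w.2, w.2))
        (fderiv ℝ FP (w.1, g w.1 w.2, w.2) (1, fderiv ℝ G w (1, 0), 0)) w.1 :=
      hasDerivAt_comp3 hPw.hasFDerivAt (hasDerivAt_id' (x := w.1)) hgw
        (hasDerivAt_const w.1 w.2)
    have h2 : D1 (psiFun P g) w.1 w.2 =
        fderiv ℝ FP (w.1, g w.1 w.2, w.2) (1, fderiv ℝ G w (1, 0), 0) - fderiv ℝ G w (1, 0) :=
      (hmain.sub hgw).deriv
    rw [h2, decomp3]
    simp [smul_eq_mul]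
    ring
  have E3 : ∀ᶠ w : ℝ × ℝ in 𝓝 (0, 0), D2 (psiFun P g) w.1 w.2 =
      fderiv ℝ FP (w.1, g w.1 w.2, w.2) (0, 0, 1) +
      (fderiv ℝ FP (w.1, g w.1 w.2, w.2) (0, 1, 0) - 1) * fderiv ℝ G w (0, 1) := by
    filter_upwards [hGev, hΓt.eventually hPev] with w hGw hPw
    have hgw : HasDerivAt (fun t => g w.1 t) (fderiv ℝ G w (0, 1)) w.2 :=
      hasDerivAt_comp2 hGw.hasFDerivAt (hasDerivAt_const w.2 w.1) (hasDerivAt_id' (x := w.2))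
    have hmain : HasDerivAt (fun t => FP (w.1, g w.1 t, t))
        (fderiv ℝ FP (w.1, g w.1 w.2, w.2) (0, fderiv ℝ G w (0, 1), 1)) w.2 :=
      hasDerivAt_comp3 hPw.hasFDerivAt (hasDerivAt_const w.2 w.1) hgw
        (hasDerivAt_id' (x := w.2))
    have h2 : D2 (psiFun P g) w.1 w.2 =
        fderiv ℝ FP (w.1, g w.1 w.2, w.2) (0, fderiv ℝ G w (0, 1), 1) - fderiv ℝ G w (0, 1) :=
      (hmain.sub hgw).deriv
    rw [h2, decomp3]
    simp [smul_eq_mul]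
    ring
  -- derivatives of fderiv-applied maps at shifted base points
  have hFv1 : ∀ v : ℝ × ℝ × ℝ, HasFDerivAt (fun z => fderiv ℝ FP z v)
      ((ContinuousLinearMap.apply ℝ ℝ v).comp (fderiv ℝ (fderiv ℝ FP) (0, 0, 0)))
      ((0 : ℝ), g 0 0, (0 : ℝ)) := by
    rw [g00]; exact hFv
  -- the four second derivatives of psi
  have hPP : D1 (D1 (psiFun P g)) 0 0 = fderiv ℝ (fderiv ℝ FP) (0, 0, 0) (1, 0, 0) (1, 0, 0) := by
    have heq : (fun s : ℝ => D1 (psiFun P g) s 0) =ᶠ[𝓝 0] (fun s =>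
        fderiv ℝ FP (s, g s 0, 0) (1, 0, 0) +
        (fderiv ℝ FP (s, g s 0, 0) (0, 1, 0) - 1) * fderiv ℝ G (s, 0) (1, 0)) := by
      filter_upwards [hsq.eventually E2] with s hs using hs
    have hT1 : HasDerivAt (fun s => fderiv ℝ FP (s, g s 0, 0) (1, 0, 0))
        (((ContinuousLinearMap.apply ℝ ℝ ((1:ℝ), (0:ℝ), (0:ℝ))).comp
          (fderiv ℝ (fderiv ℝ FP) (0, 0, 0))) (1, fderiv ℝ G (0, 0) (1, 0), 0)) 0 :=
      hasDerivAt_comp3 (hFv1 (1, 0, 0)) (hasDerivAt_id' (x := (0:ℝ))) hg1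
        (hasDerivAt_const 0 (0:ℝ))
    have hT2 : HasDerivAt (fun s =>
        (fderiv ℝ FP (s, g s 0, 0) (0, 1, 0) - 1) * fderiv ℝ G (s, 0) (1, 0)) 0 0 := by
      refine hasDerivAt_mul_zero
        ((hasDerivAt_comp3 (hFv1 (0, 1, 0)) (hasDerivAt_id' (x := (0:ℝ))) hg1
          (hasDerivAt_const 0 (0:ℝ))).sub_const 1)
        (hasDerivAt_comp2 (hGv (1, 0)) (hasDerivAt_id' (x := (0:ℝ)))
          (hasDerivAt_const 0 (0:ℝ))) ?_ ?_
      · rw [g00, hP2]; ring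
      · exact hgq
    have h0 : D1 (D1 (psiFun P g)) 0 0 = deriv (fun s =>
        fderiv ℝ FP (s, g s 0, 0) (1, 0, 0) +
        (fderiv ℝ FP (s, g s 0, 0) (0, 1, 0) - 1) * fderiv ℝ G (s, 0) (1, 0)) 0 := heq.deriv_eq
    erw [h0, (hT1.add hT2).deriv, hgq]
    simp
  have hPE : D2 (D1 (psiFun P g)) 0 0 = fderiv ℝ (fderiv ℝ FP) (0, 0, 0) (0, 0, 1) (1, 0, 0) := by
    have heq : (fun t : ℝ => D1 (psiFun P g) 0 t) =ᶠ[𝓝 0] (fun t =>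
        fderiv ℝ FP (0, g 0 t, t) (1, 0, 0) +
        (fderiv ℝ FP (0, g 0 t, t) (0, 1, 0) - 1) * fderiv ℝ G (0, t) (1, 0)) := by
      filter_upwards [hse.eventually E2] with t ht using ht
    have hT1 : HasDerivAt (fun t => fderiv ℝ FP (0, g 0 t, t) (1, 0, 0))
        (((ContinuousLinearMap.apply ℝ ℝ ((1:ℝ), (0:ℝ), (0:ℝ))).comp
          (fderiv ℝ (fderiv ℝ FP) (0, 0, 0))) (0, fderiv ℝ G (0, 0) (0, 1), 1)) 0 :=
      hasDerivAt_comp3 (hFv1 (1, 0, 0)) (hasDerivAt_const 0 (0:ℝ)) hg2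
        (hasDerivAt_id' (x := (0:ℝ)))
    have hT2 : HasDerivAt (fun t =>
        (fderiv ℝ FP (0, g 0 t, t) (0, 1, 0) - 1) * fderiv ℝ G (0, t) (1, 0)) 0 0 := by
      refine hasDerivAt_mul_zero
        ((hasDerivAt_comp3 (hFv1 (0, 1, 0)) (hasDerivAt_const 0 (0:ℝ)) hg2
          (hasDerivAt_id' (x := (0:ℝ)))).sub_const 1)
        (hasDerivAt_comp2 (hGv (1, 0)) (hasDerivAt_const 0 (0:ℝ))
          (hasDerivAt_id' (x := (0:ℝ)))) ?_ ?_
      · rw [g00, hP2]; ring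
      · exact hgq
    have h0 : D2 (D1 (psiFun P g)) 0 0 = deriv (fun t =>
        fderiv ℝ FP (0, g 0 t, t) (1, 0, 0) +
        (fderiv ℝ FP (0, g 0 t, t) (0, 1, 0) - 1) * fderiv ℝ G (0, t) (1, 0)) 0 := heq.deriv_eq
    erw [h0, (hT1.add hT2).deriv, hge]
    simp
  have hEP : D1 (D2 (psiFun P g)) 0 0 = fderiv ℝ (fderiv ℝ FP) (0, 0, 0) (1, 0, 0) (0, 0, 1) := by
    have heq : (fun s : ℝ => D2 (psiFun P g) s 0) =ᶠ[𝓝 0] (fun s =>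
        fderiv ℝ FP (s, g s 0, 0) (0, 0, 1) +
        (fderiv ℝ FP (s, g s 0, 0) (0, 1, 0) - 1) * fderiv ℝ G (s, 0) (0, 1)) := by
      filter_upwards [hsq.eventually E3] with s hs using hs
    have hT1 : HasDerivAt (fun s => fderiv ℝ FP (s, g s 0, 0) (0, 0, 1))
        (((ContinuousLinearMap.apply ℝ ℝ ((0:ℝ), (0:ℝ), (1:ℝ))).comp
          (fderiv ℝ (fderiv ℝ FP) (0, 0, 0))) (1, fderiv ℝ G (0, 0) (1, 0), 0)) 0 :=
      hasDerivAt_comp3 (hFv1 (0, 0, 1)) (hasDerivAt_id' (x := (0:ℝ))) hg1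
        (hasDerivAt_const 0 (0:ℝ))
    have hT2 : HasDerivAt (fun s =>
        (fderiv ℝ FP (s, g s 0, 0) (0, 1, 0) - 1) * fderiv ℝ G (s, 0) (0, 1)) 0 0 := by
      refine hasDerivAt_mul_zero
        ((hasDerivAt_comp3 (hFv1 (0, 1, 0)) (hasDerivAt_id' (x := (0:ℝ))) hg1
          (hasDerivAt_const 0 (0:ℝ))).sub_const 1)
        (hasDerivAt_comp2 (hGv (0, 1)) (hasDerivAt_id' (x := (0:ℝ)))
          (hasDerivAt_const 0 (0:ℝ))) ?_ ?_
      · rw [g00, hP2]; ring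
      · exact hge
    have h0 : D1 (D2 (psiFun P g)) 0 0 = deriv (fun s =>
        fderiv ℝ FP (s, g s 0, 0) (0, 0, 1) +
        (fderiv ℝ FP (s, g s 0, 0) (0, 1, 0) - 1) * fderiv ℝ G (s, 0) (0, 1)) 0 := heq.deriv_eq
    erw [h0, (hT1.add hT2).deriv, hgq]
    simp
  have hEE : D2 (D2 (psiFun P g)) 0 0 = fderiv ℝ (fderiv ℝ FP) (0, 0, 0) (0, 0, 1) (0, 0, 1) := by
    have heq : (fun t : ℝ => D2 (psiFun P g) 0 t) =ᶠ[𝓝 0] (fun t =>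
        fderiv ℝ FP (0, g 0 t, t) (0, 0, 1) +
        (fderiv ℝ FP (0, g 0 t, t) (0, 1, 0) - 1) * fderiv ℝ G (0, t) (0, 1)) := by
      filter_upwards [hse.eventually E3] with t ht using ht
    have hT1 : HasDerivAt (fun t => fderiv ℝ FP (0, g 0 t, t) (0, 0, 1))
        (((ContinuousLinearMap.apply ℝ ℝ ((0:ℝ), (0:ℝ), (1:ℝ))).comp
          (fderiv ℝ (fderiv ℝ FP) (0, 0, 0))) (0, fderiv ℝ G (0, 0) (0, 1), 1)) 0 :=
      hasDerivAt_comp3 (hFv1 (0, 0, 1)) (hasDerivAt_const 0 (0:ℝ)) hg2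
        (hasDerivAt_id' (x := (0:ℝ)))
    have hT2 : HasDerivAt (fun t =>
        (fderiv ℝ FP (0, g 0 t, t) (0, 1, 0) - 1) * fderiv ℝ G (0, t) (0, 1)) 0 0 := by
      refine hasDerivAt_mul_zero
        ((hasDerivAt_comp3 (hFv1 (0, 1, 0)) (hasDerivAt_const 0 (0:ℝ)) hg2
          (hasDerivAt_id' (x := (0:ℝ)))).sub_const 1)
        (hasDerivAt_comp2 (hGv (0, 1)) (hasDerivAt_const 0 (0:ℝ))
          (hasDerivAt_id' (x := (0:ℝ)))) ?_ ?_
      · rw [g00, hP2]; ring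
      · exact hge
    have h0 : D2 (D2 (psiFun P g)) 0 0 = deriv (fun t =>
        fderiv ℝ FP (0, g 0 t, t) (0, 0, 1) +
        (fderiv ℝ FP (0, g 0 t, t) (0, 1, 0) - 1) * fderiv ℝ G (0, t) (0, 1)) 0 := heq.deriv_eq
    erw [h0, (hT1.add hT2).deriv, hge]
    simp
  -- bridges for the second partials of P
  have eDq : ∀ᶠ z in 𝓝 ((0, 0, 0) : ℝ × ℝ × ℝ),
      Dq P z.1 z.2.1 z.2.2 = fderiv ℝ FP z (1, 0, 0) := by
    filter_upwards [hPev] with z hz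
    exact (hasDerivAt_comp3 hz.hasFDerivAt (hasDerivAt_id' (x := z.1))
      (hasDerivAt_const z.1 z.2.1) (hasDerivAt_const z.1 z.2.2)).deriv
  have eDe : ∀ᶠ z in 𝓝 ((0, 0, 0) : ℝ × ℝ × ℝ),
      De P z.1 z.2.1 z.2.2 = fderiv ℝ FP z (0, 0, 1) := by
    filter_upwards [hPev] with z hz
    exact (hasDerivAt_comp3 hz.hasFDerivAt (hasDerivAt_const z.2.2 z.1)
      (hasDerivAt_const z.2.2 z.2.1) (hasDerivAt_id' (x := z.2.2))).deriv
  have hmq : Tendsto (fun s : ℝ => ((s, 0, 0) : ℝ × ℝ × ℝ)) (𝓝 0) (𝓝 (0, 0, 0)) :=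
    (continuous_id.prodMk continuous_const).tendsto' 0 (0, 0, 0) rfl
  have hme : Tendsto (fun t : ℝ => ((0, 0, t) : ℝ × ℝ × ℝ)) (𝓝 0) (𝓝 (0, 0, 0)) :=
    (continuous_const.prodMk (continuous_const.prodMk continuous_id)).tendsto' 0 (0, 0, 0) rfl
  have hDqDq : Dq (Dq P) 0 0 0 = fderiv ℝ (fderiv ℝ FP) (0, 0, 0) (1, 0, 0) (1, 0, 0) := by
    have heq : (fun s : ℝ => Dq P s 0 0) =ᶠ[𝓝 0]
        (fun s => fderiv ℝ FP (s, 0, 0) (1, 0, 0)) := by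
      filter_upwards [hmq.eventually eDq] with s hs using hs
    have hd : HasDerivAt (fun s => fderiv ℝ FP (s, 0, 0) (1, 0, 0))
        (((ContinuousLinearMap.apply ℝ ℝ ((1:ℝ), (0:ℝ), (0:ℝ))).comp
          (fderiv ℝ (fderiv ℝ FP) (0, 0, 0))) (1, 0, 0)) 0 :=
      hasDerivAt_comp3 (hFv (1, 0, 0)) (hasDerivAt_id' (x := (0:ℝ))) (hasDerivAt_const 0 (0:ℝ))
        (hasDerivAt_const 0 (0:ℝ))
    have h0 : Dq (Dq P) 0 0 0 = deriv (fun s => fderiv ℝ FP (s, 0, 0) (1, 0, 0)) 0 := heq.deriv_eq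
    rw [h0, hd.deriv]
    simp
  have hDeDq : De (Dq P) 0 0 0 = fderiv ℝ (fderiv ℝ FP) (0, 0, 0) (0, 0, 1) (1, 0, 0) := by
    have heq : (fun t : ℝ => Dq P 0 0 t) =ᶠ[𝓝 0]
        (fun t => fderiv ℝ FP (0, 0, t) (1, 0, 0)) := by
      filter_upwards [hme.eventually eDq] with t ht using ht
    have hd : HasDerivAt (fun t => fderiv ℝ FP (0, 0, t) (1, 0, 0))
        (((ContinuousLinearMap.apply ℝ ℝ ((1:ℝ), (0:ℝ), (0:ℝ))).comp
          (fderiv ℝ (fderiv ℝ FP) (0, 0, 0))) (0, 0, 1)) 0 :=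
      hasDerivAt_comp3 (hFv (1, 0, 0)) (hasDerivAt_const 0 (0:ℝ)) (hasDerivAt_const 0 (0:ℝ))
        (hasDerivAt_id' (x := (0:ℝ)))
    have h0 : De (Dq P) 0 0 0 = deriv (fun t => fderiv ℝ FP (0, 0, t) (1, 0, 0)) 0 := heq.deriv_eq
    rw [h0, hd.deriv]
    simp
  have hDeDe : De (De P) 0 0 0 = fderiv ℝ (fderiv ℝ FP) (0, 0, 0) (0, 0, 1) (0, 0, 1) := by
    have heq : (fun t : ℝ => De P 0 0 t) =ᶠ[𝓝 0]
        (fun t => fderiv ℝ FP (0, 0, t) (0, 0, 1)) := by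
      filter_upwards [hme.eventually eDe] with t ht using ht
    have hd : HasDerivAt (fun t => fderiv ℝ FP (0, 0, t) (0, 0, 1))
        (((ContinuousLinearMap.apply ℝ ℝ ((0:ℝ), (0:ℝ), (1:ℝ))).comp
          (fderiv ℝ (fderiv ℝ FP) (0, 0, 0))) (0, 0, 1)) 0 :=
      hasDerivAt_comp3 (hFv (0, 0, 1)) (hasDerivAt_const 0 (0:ℝ)) (hasDerivAt_const 0 (0:ℝ))
        (hasDerivAt_id' (x := (0:ℝ)))
    have h0 : De (De P) 0 0 0 = deriv (fun t => fderiv ℝ FP (0, 0, t) (0, 0, 1)) 0 := heq.deriv_eq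
    rw [h0, hd.deriv]
    simp
  have hsym : fderiv ℝ (fderiv ℝ FP) (0, 0, 0) (1, 0, 0) (0, 0, 1) =
      fderiv ℝ (fderiv ℝ FP) (0, 0, 0) (0, 0, 1) (1, 0, 0) :=
    (hPat.isSymmSndFDerivAt (by rw [minSmoothness_of_isRCLikeNormedField]; exact (WithTop.coe_le_coe.2 (le_top : (2 : ℕ∞) ≤ ⊤) :
      ((2 : ℕ∞) : WithTop ℕ∞) ≤ ((⊤ : ℕ∞) : WithTop ℕ∞)))) (1, 0, 0) (0, 0, 1)
  -- assemble the neighborhoods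
  have hev3 : ∀ᶠ z in 𝓝 ((0, 0, 0) : ℝ × ℝ × ℝ),
      ContDiffAt ℝ (⊤ : ℕ∞) Φ z ∧ IsUnit (fderiv ℝ Φ z) := by
    have hcont : ContinuousAt (fderiv ℝ Φ) (0, 0, 0) :=
      (hΦat.fderiv_right (m := 0) (by simp)).continuousAt
    have hunit : IsUnit (fderiv ℝ Φ (0, 0, 0)) := by
      rw [hΦfd.fderiv]; exact ⟨(ContinuousLinearEquiv.unitsEquiv ℝ _).symm A, rfl⟩
    have hopen := (Units.isOpen (R := (ℝ × ℝ × ℝ) →L[ℝ] (ℝ × ℝ × ℝ))).mem_nhds hunit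
    filter_upwards [hU.mem_nhds hU0, hcont.preimage_mem_nhds hopen] with z hz1 hz2
    exact ⟨(contDiff_fst.contDiffAt).prodMk ((hQ.contDiffAt (hU.mem_nhds hz1)).prodMk
      ((contDiff_snd.comp contDiff_snd).contDiffAt)), hz2⟩
  have hevy : ∀ᶠ y in 𝓝 ((0, 0, 0) : ℝ × ℝ × ℝ), ContDiffAt ℝ (⊤ : ℕ∞) PH.symm y := by
    have hct : Tendsto PH.symm (𝓝 (0, 0, 0)) (𝓝 (0, 0, 0)) := by
      have := (PH.continuousAt_symm htgt).tendsto
      rwa [hsymm0] at this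
    filter_upwards [hct.eventually hev3, PH.open_target.mem_nhds htgt] with y hy hyt
    obtain ⟨u, hu⟩ := hy.2
    apply PH.contDiffAt_symm hyt (f₀' := ContinuousLinearEquiv.unitsEquiv ℝ _ u)
    · have hd : DifferentiableAt ℝ Φ (PH.symm y) := hy.1.differentiableAt (by simp)
      have hcu : ((ContinuousLinearEquiv.unitsEquiv ℝ (ℝ × ℝ × ℝ) u : (ℝ × ℝ × ℝ) ≃L[ℝ] _) :
          (ℝ × ℝ × ℝ) →L[ℝ] (ℝ × ℝ × ℝ)) = fderiv ℝ Φ (PH.symm y) := hu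
      rw [hcu]; exact hd.hasFDerivAt
    · exact hy.1
  have hevw : ∀ᶠ w in 𝓝 ((0, 0) : ℝ × ℝ), ContDiffAt ℝ (⊤ : ℕ∞) G w := by
    filter_upwards [hjt.eventually hevy] with w hw
    have hc : ContDiffAt ℝ (⊤ : ℕ∞)
        (PH.symm ∘ (fun w : ℝ × ℝ => ((w.1, w.1, w.2) : ℝ × ℝ × ℝ))) w :=
      ContDiffAt.comp (g := PH.symm)
        (f := fun w : ℝ × ℝ => ((w.1, w.1, w.2) : ℝ × ℝ × ℝ)) w hw hjc.contDiffAt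
    exact ((contDiff_fst.comp contDiff_snd).contDiffAt).comp w hc
  obtain ⟨W₁, hW₁nhds, hGW₁⟩ : ∃ W₁ ∈ 𝓝 ((0, 0) : ℝ × ℝ), ContDiffOn ℝ (⊤ : ℕ∞) G W₁ :=
    ⟨_, hevw, fun w hw => ContDiffAt.contDiffWithinAt (show ContDiffAt ℝ (⊤ : ℕ∞) G w from hw)⟩
  have hQmem : {w : ℝ × ℝ | Q w.1 (g w.1 w.2) w.2 = w.1} ∈ 𝓝 ((0, 0) : ℝ × ℝ) :=
    E1.mono fun w hw => hw.2
  set W := interior (W₁ ∩ {w : ℝ × ℝ | Q w.1 (g w.1 w.2) w.2 = w.1}) with hWdef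
  have hW0 : ((0, 0) : ℝ × ℝ) ∈ W :=
    mem_interior_iff_mem_nhds.2 (Filter.inter_mem hW₁nhds hQmem)
  have hGW : ContDiffOn ℝ (⊤ : ℕ∞) G W := hGW₁.mono fun w hw => (interior_subset hw).1
  set V := (PH.source ∩ U) ∩ (fun z : ℝ × ℝ × ℝ => (z.1, z.2.2)) ⁻¹' W with hVdef
  have hVopen : IsOpen V :=
    (PH.open_source.inter hU).inter (isOpen_interior.preimage
      (continuous_fst.prodMk (continuous_snd.comp continuous_snd)))
  have hV0 : ((0, 0, 0) : ℝ × ℝ × ℝ) ∈ V := ⟨⟨hsrc, hU0⟩, hW0⟩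
  refine ⟨V, W, g, hVopen, hV0, fun z hz => hz.1.2, isOpen_interior, hW0, hGW, g00,
    hD1g, hD2g, ?_, hDψ1, hDψ2, ?_⟩
  · intro z hz
    obtain ⟨⟨hzsrc, hzU⟩, hzW⟩ := hz
    refine ⟨hzW, ?_, ?_⟩
    · intro hfix
      have hΦz : Φ z = ((z.1, z.1, z.2.2) : ℝ × ℝ × ℝ) := by
        show ((z.1, F0 z, z.2.2) : ℝ × ℝ × ℝ) = _
        rw [show F0 z = z.1 from hfix]
      have hinv : PH.symm (z.1, z.1, z.2.2) = z := by
        rw [← hΦz, ← hcoe]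
        exact PH.left_inv hzsrc
      show z.2.1 = (PH.symm (z.1, z.1, z.2.2)).2.1
      rw [hinv]
    · intro hp
      have hQz : Q z.1 (g z.1 z.2.2) z.2.2 = z.1 := (interior_subset hzW).2
      rw [hp]
      exact hQz
  · rw [hPP, hPE, hEP, hEE, hDqDq, hDeDq, hDeDe, hsym]
end

section
/- Let (Q,P) be a symplectic family with a fixed point at the origin such that at the origin Q_q = 1, P_q = 0 and P_p = 1 (the q-axis lies in the eigenspace), and let A be a fixed point branch with q_A'(0) = p_A'(0) = 0 (the branch is tangent to the ε-axis). Then Q_ε = 0, P_ε = 0 and P_εε = 0 at the origin, and the derivative of the trace function satisfies Tr_A'(0) = Q_p(0,0,0)·P_qε(0,0,0). -/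
open Set Filter Topology

/-- slice derivative in the first variable equals fderiv applied to (1,0,0). -/
lemma branch_slice1 {F : ℝ × ℝ × ℝ → ℝ} {q p e : ℝ} (h : DifferentiableAt ℝ F (q, p, e)) :
    HasDerivAt (fun s => F (s, p, e)) (fderiv ℝ F (q, p, e) (1, 0, 0)) q := by
  have hγ : HasDerivAt (fun s : ℝ => (s, p, e)) ((1 : ℝ), (0 : ℝ), (0 : ℝ)) q :=
    (hasDerivAt_id q).prodMk (hasDerivAt_const _ _)
  exact h.hasFDerivAt.comp_hasDerivAt q hγ

/-- slice derivative in the second variable equals fderiv applied to (0,1,0). -/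
lemma branch_slice2 {F : ℝ × ℝ × ℝ → ℝ} {q p e : ℝ} (h : DifferentiableAt ℝ F (q, p, e)) :
    HasDerivAt (fun s => F (q, s, e)) (fderiv ℝ F (q, p, e) (0, 1, 0)) p := by
  have hγ : HasDerivAt (fun s : ℝ => (q, s, e)) ((0 : ℝ), (1 : ℝ), (0 : ℝ)) p :=
    (hasDerivAt_const _ _).prodMk ((hasDerivAt_id p).prodMk (hasDerivAt_const _ _))
  exact h.hasFDerivAt.comp_hasDerivAt p hγ

/-- slice derivative in the third variable equals fderiv applied to (0,0,1). -/
lemma branch_slice3 {F : ℝ × ℝ × ℝ → ℝ} {q p e : ℝ} (h : DifferentiableAt ℝ F (q, p, e)) :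
    HasDerivAt (fun s => F (q, p, s)) (fderiv ℝ F (q, p, e) (0, 0, 1)) e := by
  have hγ : HasDerivAt (fun s : ℝ => (q, p, s)) ((0 : ℝ), (0 : ℝ), (1 : ℝ)) e :=
    (hasDerivAt_const _ _).prodMk ((hasDerivAt_const _ _).prodMk (hasDerivAt_id e))
  exact h.hasFDerivAt.comp_hasDerivAt e hγ

/-- decomposition of a tangent vector in the standard basis. -/
lemma branch_vec (a b c : ℝ) :
    ((a, b, c) : ℝ × ℝ × ℝ) = a • ((1:ℝ), (0:ℝ), (0:ℝ)) + b • ((0:ℝ), (1:ℝ), (0:ℝ))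
      + c • ((0:ℝ), (0:ℝ), (1:ℝ)) := by
  simp [Prod.ext_iff]

/-- a continuous linear map applied to (a,b,c). -/
lemma branch_clm (L : (ℝ × ℝ × ℝ) →L[ℝ] ℝ) (a b c : ℝ) :
    L (a, b, c) = a * L (1, 0, 0) + b * L (0, 1, 0) + c * L (0, 0, 1) := by
  rw [branch_vec a b c]
  simp only [map_add, map_smul, smul_eq_mul]

/-- If the `q`-axis lies in the eigenspace at the bifurcating fixed point
(`Q_q = 1`, `P_q = 0`, `P_p = 1` at the origin) and `A` is a fixed point branch tangent
to the `ε`-axis (`q_A'(0) = p_A'(0) = 0`), then `Q_ε = P_ε = P_εε = 0` at the origin and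
`Tr_A'(0) = Q_p(0,0,0) · P_qε(0,0,0)`. -/
theorem branch_trace_derivative
    (Q P : ℝ → ℝ → ℝ → ℝ) (U : Set (ℝ × ℝ × ℝ)) (hU : IsOpen U) (hU0 : (0, 0, 0) ∈ U)
    (hQ : ContDiffOn ℝ (⊤ : ℕ∞) (fun z : ℝ × ℝ × ℝ => Q z.1 z.2.1 z.2.2) U)
    (hP : ContDiffOn ℝ (⊤ : ℕ∞) (fun z : ℝ × ℝ × ℝ => P z.1 z.2.1 z.2.2) U)
    (hsymp : ∀ z ∈ U, Dq Q z.1 z.2.1 z.2.2 * Dp P z.1 z.2.1 z.2.2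
      - Dp Q z.1 z.2.1 z.2.2 * Dq P z.1 z.2.1 z.2.2 = 1)
    (hQ0 : Q 0 0 0 = 0) (hP0 : P 0 0 0 = 0)
    (hQq : Dq Q 0 0 0 = 1) (hPq : Dq P 0 0 0 = 0) (hPp : Dp P 0 0 0 = 1)
    (r : ℝ) (hr : 0 < r) (qA pA : ℝ → ℝ)
    (hqA : ContDiffOn ℝ (⊤ : ℕ∞) qA (Set.Ioo (-r) r)) (hpA : ContDiffOn ℝ (⊤ : ℕ∞) pA (Set.Ioo (-r) r))
    (hqA0 : qA 0 = 0) (hpA0 : pA 0 = 0)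
    (hfix : ∀ e ∈ Set.Ioo (-r) r,
      Q (qA e) (pA e) e = qA e ∧ P (qA e) (pA e) e = pA e)
    (hqA' : deriv qA 0 = 0) (hpA' : deriv pA 0 = 0) :
    De Q 0 0 0 = 0 ∧ De P 0 0 0 = 0 ∧ De (De P) 0 0 0 = 0 ∧
    deriv (fun e => Dq Q (qA e) (pA e) e + Dp P (qA e) (pA e) e) 0
      = Dp Q 0 0 0 * De (Dq P) 0 0 0 := by
  classical
  set Qz : ℝ × ℝ × ℝ → ℝ := fun z => Q z.1 z.2.1 z.2.2 with hQzdef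
  set Pz : ℝ × ℝ × ℝ → ℝ := fun z => P z.1 z.2.1 z.2.2 with hPzdef
  have hIoo : IsOpen (Set.Ioo (-r) r) := isOpen_Ioo
  have h0I : (0 : ℝ) ∈ Set.Ioo (-r) r := ⟨by linarith, hr⟩
  have hQd : ∀ z ∈ U, DifferentiableAt ℝ Qz z := fun z hz =>
    (hQ.differentiableOn (by simp)).differentiableAt (hU.mem_nhds hz)
  have hPd : ∀ z ∈ U, DifferentiableAt ℝ Pz z := fun z hz =>
    (hP.differentiableOn (by simp)).differentiableAt (hU.mem_nhds hz)
  set GQq : ℝ × ℝ × ℝ → ℝ := fun z => fderiv ℝ Qz z (1, 0, 0) with hGQqdef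
  set GQp : ℝ × ℝ × ℝ → ℝ := fun z => fderiv ℝ Qz z (0, 1, 0) with hGQpdef
  set GQe : ℝ × ℝ × ℝ → ℝ := fun z => fderiv ℝ Qz z (0, 0, 1) with hGQedef
  set GPq : ℝ × ℝ × ℝ → ℝ := fun z => fderiv ℝ Pz z (1, 0, 0) with hGPqdef
  set GPp : ℝ × ℝ × ℝ → ℝ := fun z => fderiv ℝ Pz z (0, 1, 0) with hGPpdef
  set GPe : ℝ × ℝ × ℝ → ℝ := fun z => fderiv ℝ Pz z (0, 0, 1) with hGPedef
  have hfQ : ContDiffOn ℝ (⊤ : ℕ∞) (fderiv ℝ Qz) U := hQ.fderiv_of_isOpen hU (by simp)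
  have hfP : ContDiffOn ℝ (⊤ : ℕ∞) (fderiv ℝ Pz) U := hP.fderiv_of_isOpen hU (by simp)
  have hGQqd : ∀ z ∈ U, DifferentiableAt ℝ GQq z := fun z hz =>
    ((hfQ.clm_apply contDiffOn_const).differentiableOn (by simp)).differentiableAt
      (hU.mem_nhds hz)
  have hGQpd : ∀ z ∈ U, DifferentiableAt ℝ GQp z := fun z hz =>
    ((hfQ.clm_apply contDiffOn_const).differentiableOn (by simp)).differentiableAt
      (hU.mem_nhds hz)
  have hGQed : ∀ z ∈ U, DifferentiableAt ℝ GQe z := fun z hz =>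
    ((hfQ.clm_apply contDiffOn_const).differentiableOn (by simp)).differentiableAt
      (hU.mem_nhds hz)
  have hGPqd : ∀ z ∈ U, DifferentiableAt ℝ GPq z := fun z hz =>
    ((hfP.clm_apply contDiffOn_const).differentiableOn (by simp)).differentiableAt
      (hU.mem_nhds hz)
  have hGPpd : ∀ z ∈ U, DifferentiableAt ℝ GPp z := fun z hz =>
    ((hfP.clm_apply contDiffOn_const).differentiableOn (by simp)).differentiableAt
      (hU.mem_nhds hz)
  have hGPed : ∀ z ∈ U, DifferentiableAt ℝ GPe z := fun z hz =>
    ((hfP.clm_apply contDiffOn_const).differentiableOn (by simp)).differentiableAt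
      (hU.mem_nhds hz)
  -- identifications of Dq, Dp, De with gradient components on U (curried form)
  have eqDqQ : ∀ q p e : ℝ, (q, p, e) ∈ U → Dq Q q p e = GQq (q, p, e) := fun q p e hz =>
    (branch_slice1 (hQd _ hz)).deriv
  have eqDpQ : ∀ q p e : ℝ, (q, p, e) ∈ U → Dp Q q p e = GQp (q, p, e) := fun q p e hz =>
    (branch_slice2 (hQd _ hz)).deriv
  have eqDeQ : ∀ q p e : ℝ, (q, p, e) ∈ U → De Q q p e = GQe (q, p, e) := fun q p e hz =>
    (branch_slice3 (hQd _ hz)).deriv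
  have eqDqP : ∀ q p e : ℝ, (q, p, e) ∈ U → Dq P q p e = GPq (q, p, e) := fun q p e hz =>
    (branch_slice1 (hPd _ hz)).deriv
  have eqDpP : ∀ q p e : ℝ, (q, p, e) ∈ U → Dp P q p e = GPp (q, p, e) := fun q p e hz =>
    (branch_slice2 (hPd _ hz)).deriv
  have eqDeP : ∀ q p e : ℝ, (q, p, e) ∈ U → De P q p e = GPe (q, p, e) := fun q p e hz =>
    (branch_slice3 (hPd _ hz)).deriv
  -- the branch curve
  set γ : ℝ → ℝ × ℝ × ℝ := fun e => (qA e, pA e, e) with hγdef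
  have hγ0 : γ 0 = ((0 : ℝ), (0 : ℝ), (0 : ℝ)) := by
    simp [hγdef, hqA0, hpA0]
  have hγ0U : γ 0 ∈ U := by rw [hγ0]; exact hU0
  have hqAd : ∀ e ∈ Set.Ioo (-r) r, DifferentiableAt ℝ qA e := fun e he =>
    (hqA.differentiableOn (by simp)).differentiableAt (hIoo.mem_nhds he)
  have hpAd : ∀ e ∈ Set.Ioo (-r) r, DifferentiableAt ℝ pA e := fun e he =>
    (hpA.differentiableOn (by simp)).differentiableAt (hIoo.mem_nhds he)
  have hγd : ∀ e ∈ Set.Ioo (-r) r, HasDerivAt γ (deriv qA e, deriv pA e, 1) e := fun e he =>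
    ((hqAd e he).hasDerivAt).prodMk (((hpAd e he).hasDerivAt).prodMk (hasDerivAt_id e))
  have hγc : ContinuousOn γ (Set.Ioo (-r) r) :=
    (hqA.continuousOn).prodMk ((hpA.continuousOn).prodMk continuousOn_id)
  set V : Set ℝ := Set.Ioo (-r) r ∩ γ ⁻¹' U with hVdef
  have hVopen : IsOpen V := hγc.isOpen_inter_preimage hIoo hU
  have hV0 : (0 : ℝ) ∈ V := ⟨h0I, by simp only [Set.mem_preimage]; exact hγ0U⟩
  have hVnhds : V ∈ 𝓝 (0 : ℝ) := hVopen.mem_nhds hV0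
  -- chain rule along the branch for Q and P
  have chainQ : ∀ e ∈ V, HasDerivAt (fun t => Qz (γ t))
      (deriv qA e * GQq (γ e) + deriv pA e * GQp (γ e) + GQe (γ e)) e := by
    intro e he
    have h1 : HasDerivAt (fun t => Qz (γ t))
        (fderiv ℝ Qz (γ e) (deriv qA e, deriv pA e, 1)) e :=
      ((hQd _ he.2).hasFDerivAt).comp_hasDerivAt e (hγd e he.1)
    have h2 : fderiv ℝ Qz (γ e) (deriv qA e, deriv pA e, 1)
        = deriv qA e * GQq (γ e) + deriv pA e * GQp (γ e) + GQe (γ e) := by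
      have h3 := branch_clm (fderiv ℝ Qz (γ e)) (deriv qA e) (deriv pA e) 1
      rw [h3]; ring
    rwa [h2] at h1
  have chainP : ∀ e ∈ V, HasDerivAt (fun t => Pz (γ t))
      (deriv qA e * GPq (γ e) + deriv pA e * GPp (γ e) + GPe (γ e)) e := by
    intro e he
    have h1 : HasDerivAt (fun t => Pz (γ t))
        (fderiv ℝ Pz (γ e) (deriv qA e, deriv pA e, 1)) e :=
      ((hPd _ he.2).hasFDerivAt).comp_hasDerivAt e (hγd e he.1)
    have h2 : fderiv ℝ Pz (γ e) (deriv qA e, deriv pA e, 1)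
        = deriv qA e * GPq (γ e) + deriv pA e * GPp (γ e) + GPe (γ e) := by
      have h3 := branch_clm (fderiv ℝ Pz (γ e)) (deriv qA e) (deriv pA e) 1
      rw [h3]; ring
    rwa [h2] at h1
  -- fixed point identities as eventual equalities
  have hfixQ : (fun t => Qz (γ t)) =ᶠ[𝓝 (0:ℝ)] qA :=
    eventuallyEq_of_mem (hIoo.mem_nhds h0I) (fun t ht => (hfix t ht).1)
  have hfixP : (fun t => Pz (γ t)) =ᶠ[𝓝 (0:ℝ)] pA :=
    eventuallyEq_of_mem (hIoo.mem_nhds h0I) (fun t ht => (hfix t ht).2)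
  -- first-derivative identity on all of V
  have hder1P : ∀ e ∈ V, deriv pA e
      = deriv qA e * GPq (γ e) + deriv pA e * GPp (γ e) + GPe (γ e) := by
    intro e he
    have heq : (fun t => Pz (γ t)) =ᶠ[𝓝 e] pA :=
      eventuallyEq_of_mem (hIoo.mem_nhds he.1) (fun t ht => (hfix t ht).2)
    have h1 := (chainP e he).deriv
    rwa [heq.deriv_eq] at h1
  -- values of gradient components at the origin
  have hGQq0 : GQq ((0:ℝ), (0:ℝ), (0:ℝ)) = 1 := by rw [← eqDqQ 0 0 0 hU0]; exact hQq
  have hGQp0 : GQp ((0:ℝ), (0:ℝ), (0:ℝ)) = Dp Q 0 0 0 := (eqDpQ 0 0 0 hU0).symm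
  have hGPq0 : GPq ((0:ℝ), (0:ℝ), (0:ℝ)) = 0 := by rw [← eqDqP 0 0 0 hU0]; exact hPq
  have hGPp0 : GPp ((0:ℝ), (0:ℝ), (0:ℝ)) = 1 := by rw [← eqDpP 0 0 0 hU0]; exact hPp
  -- Part 1 : De Q 0 0 0 = 0
  have hGQe0 : GQe ((0:ℝ), (0:ℝ), (0:ℝ)) = 0 := by
    have h2 := (chainQ 0 hV0).deriv
    rw [hfixQ.deriv_eq, hγ0, hqA', hpA'] at h2
    simpa using h2.symm
  have part1 : De Q 0 0 0 = 0 := by rw [eqDeQ 0 0 0 hU0]; exact hGQe0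
  -- Part 2 : De P 0 0 0 = 0
  have hGPe0 : GPe ((0:ℝ), (0:ℝ), (0:ℝ)) = 0 := by
    have h2 := (chainP 0 hV0).deriv
    rw [hfixP.deriv_eq, hγ0, hqA', hpA'] at h2
    simpa using h2.symm
  have part2 : De P 0 0 0 = 0 := by rw [eqDeP 0 0 0 hU0]; exact hGPe0
  -- second derivatives of the branch exist
  have hqA'd : DifferentiableAt ℝ (deriv qA) 0 :=
    ((hqA.deriv_of_isOpen hIoo (m := (⊤ : ℕ∞)) (by simp)).differentiableOn (by simp)).differentiableAt
      (hIoo.mem_nhds h0I)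
  have hpA'd : DifferentiableAt ℝ (deriv pA) 0 :=
    ((hpA.deriv_of_isOpen hIoo (m := (⊤ : ℕ∞)) (by simp)).differentiableOn (by simp)).differentiableAt
      (hIoo.mem_nhds h0I)
  have hγd0 : HasDerivAt γ ((0:ℝ), (0:ℝ), (1:ℝ)) 0 := by
    have := hγd 0 h0I
    rwa [hqA', hpA'] at this
  -- derivatives of gradient components along the branch at 0
  have hGQqγ : HasDerivAt (fun t => GQq (γ t))
      (fderiv ℝ GQq ((0:ℝ),(0:ℝ),(0:ℝ)) (0,0,1)) 0 := by
    have h := ((hGQqd _ hγ0U).hasFDerivAt).comp_hasDerivAt 0 hγd0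
    rwa [hγ0] at h
  have hGQpγ : HasDerivAt (fun t => GQp (γ t))
      (fderiv ℝ GQp ((0:ℝ),(0:ℝ),(0:ℝ)) (0,0,1)) 0 := by
    have h := ((hGQpd _ hγ0U).hasFDerivAt).comp_hasDerivAt 0 hγd0
    rwa [hγ0] at h
  have hGPqγ : HasDerivAt (fun t => GPq (γ t))
      (fderiv ℝ GPq ((0:ℝ),(0:ℝ),(0:ℝ)) (0,0,1)) 0 := by
    have h := ((hGPqd _ hγ0U).hasFDerivAt).comp_hasDerivAt 0 hγd0
    rwa [hγ0] at h
  have hGPpγ : HasDerivAt (fun t => GPp (γ t))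
      (fderiv ℝ GPp ((0:ℝ),(0:ℝ),(0:ℝ)) (0,0,1)) 0 := by
    have h := ((hGPpd _ hγ0U).hasFDerivAt).comp_hasDerivAt 0 hγd0
    rwa [hγ0] at h
  have hGPeγ : HasDerivAt (fun t => GPe (γ t))
      (fderiv ℝ GPe ((0:ℝ),(0:ℝ),(0:ℝ)) (0,0,1)) 0 := by
    have h := ((hGPed _ hγ0U).hasFDerivAt).comp_hasDerivAt 0 hγd0
    rwa [hγ0] at h
  -- Part 3 : De (De P) 0 0 0 = 0
  have hGPe' : fderiv ℝ GPe ((0:ℝ),(0:ℝ),(0:ℝ)) (0,0,1) = 0 := by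
    have hψ : HasDerivAt
        (fun t => deriv qA t * GPq (γ t) + deriv pA t * GPp (γ t) + GPe (γ t))
        ((deriv (deriv qA) 0 * GPq (γ 0)
            + deriv qA 0 * fderiv ℝ GPq ((0:ℝ),(0:ℝ),(0:ℝ)) (0,0,1))
          + (deriv (deriv pA) 0 * GPp (γ 0)
            + deriv pA 0 * fderiv ℝ GPp ((0:ℝ),(0:ℝ),(0:ℝ)) (0,0,1))
          + fderiv ℝ GPe ((0:ℝ),(0:ℝ),(0:ℝ)) (0,0,1)) 0 :=
      (((hqA'd.hasDerivAt).mul hGPqγ).add ((hpA'd.hasDerivAt).mul hGPpγ)).add hGPeγ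
    have heq : (fun t => deriv qA t * GPq (γ t) + deriv pA t * GPp (γ t) + GPe (γ t))
        =ᶠ[𝓝 (0:ℝ)] deriv pA :=
      eventuallyEq_of_mem hVnhds (fun t ht => (hder1P t ht).symm)
    have h3 := hψ.deriv
    rw [heq.deriv_eq, hγ0, hGPq0, hGPp0, hqA', hpA'] at h3
    linarith
  have hWmem : ∀ᶠ e in 𝓝 (0:ℝ), ((0:ℝ), (0:ℝ), e) ∈ U := by
    have hc : Continuous fun e : ℝ => ((0:ℝ), (0:ℝ), e) :=
      continuous_const.prodMk (continuous_const.prodMk continuous_id)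
    have h1 : (fun e : ℝ => ((0:ℝ), (0:ℝ), e)) ⁻¹' U ∈ 𝓝 (0:ℝ) :=
      hc.continuousAt.preimage_mem_nhds (hU.mem_nhds hU0)
    exact eventually_of_mem h1 (fun e he => he)
  have part3 : De (De P) 0 0 0 = 0 := by
    have heq : (fun e => De P 0 0 e) =ᶠ[𝓝 (0:ℝ)] fun e => GPe ((0:ℝ), (0:ℝ), e) :=
      hWmem.mono (fun e he => eqDeP 0 0 e he)
    have h2 : HasDerivAt (fun e => GPe ((0:ℝ), (0:ℝ), e))
        (fderiv ℝ GPe ((0:ℝ),(0:ℝ),(0:ℝ)) (0,0,1)) 0 := branch_slice3 (hGPed _ hU0)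
    show deriv (fun s => De P 0 0 s) 0 = 0
    rw [heq.deriv_eq, h2.deriv, hGPe']
  -- Part 4 : trace derivative
  have htr : HasDerivAt (fun t => GQq (γ t) + GPp (γ t))
      (fderiv ℝ GQq ((0:ℝ),(0:ℝ),(0:ℝ)) (0,0,1)
        + fderiv ℝ GPp ((0:ℝ),(0:ℝ),(0:ℝ)) (0,0,1)) 0 := hGQqγ.add hGPpγ
  have heqtr : (fun e => Dq Q (qA e) (pA e) e + Dp P (qA e) (pA e) e)
      =ᶠ[𝓝 (0:ℝ)] fun t => GQq (γ t) + GPp (γ t) :=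
    eventuallyEq_of_mem hVnhds (fun t ht => by
      have h1 : Dq Q (qA t) (pA t) t = GQq (γ t) := eqDqQ (qA t) (pA t) t ht.2
      have h2 : Dp P (qA t) (pA t) t = GPp (γ t) := eqDpP (qA t) (pA t) t ht.2
      show Dq Q (qA t) (pA t) t + Dp P (qA t) (pA t) t = GQq (γ t) + GPp (γ t)
      rw [h1, h2])
  have htrace : deriv (fun e => Dq Q (qA e) (pA e) e + Dp P (qA e) (pA e) e) 0
      = fderiv ℝ GQq ((0:ℝ),(0:ℝ),(0:ℝ)) (0,0,1)
        + fderiv ℝ GPp ((0:ℝ),(0:ℝ),(0:ℝ)) (0,0,1) := by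
    rw [heqtr.deriv_eq, htr.deriv]
  -- differentiate the symplectic identity along the ε-axis
  have hsymp' : (fun e => GQq ((0:ℝ), (0:ℝ), e) * GPp ((0:ℝ), (0:ℝ), e)
      - GQp ((0:ℝ), (0:ℝ), e) * GPq ((0:ℝ), (0:ℝ), e)) =ᶠ[𝓝 (0:ℝ)] fun _ => (1:ℝ) :=
    hWmem.mono (fun e he => by
      show GQq ((0:ℝ), (0:ℝ), e) * GPp ((0:ℝ), (0:ℝ), e)
        - GQp ((0:ℝ), (0:ℝ), e) * GPq ((0:ℝ), (0:ℝ), e) = 1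
      rw [← eqDqQ 0 0 e he, ← eqDpP 0 0 e he, ← eqDpQ 0 0 e he, ← eqDqP 0 0 e he]
      exact hsymp ((0:ℝ), (0:ℝ), e) he)
  have hS : HasDerivAt (fun e => GQq ((0:ℝ), (0:ℝ), e) * GPp ((0:ℝ), (0:ℝ), e)
      - GQp ((0:ℝ), (0:ℝ), e) * GPq ((0:ℝ), (0:ℝ), e))
      ((fderiv ℝ GQq ((0:ℝ),(0:ℝ),(0:ℝ)) (0,0,1) * GPp ((0:ℝ),(0:ℝ),(0:ℝ))
          + GQq ((0:ℝ),(0:ℝ),(0:ℝ)) * fderiv ℝ GPp ((0:ℝ),(0:ℝ),(0:ℝ)) (0,0,1))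
        - (fderiv ℝ GQp ((0:ℝ),(0:ℝ),(0:ℝ)) (0,0,1) * GPq ((0:ℝ),(0:ℝ),(0:ℝ))
          + GQp ((0:ℝ),(0:ℝ),(0:ℝ)) * fderiv ℝ GPq ((0:ℝ),(0:ℝ),(0:ℝ)) (0,0,1))) 0 :=
    ((branch_slice3 (hGQqd _ hU0)).mul (branch_slice3 (hGPpd _ hU0))).sub
      ((branch_slice3 (hGQpd _ hU0)).mul (branch_slice3 (hGPqd _ hU0)))
  have h0 : (fderiv ℝ GQq ((0:ℝ),(0:ℝ),(0:ℝ)) (0,0,1) * GPp ((0:ℝ),(0:ℝ),(0:ℝ))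
          + GQq ((0:ℝ),(0:ℝ),(0:ℝ)) * fderiv ℝ GPp ((0:ℝ),(0:ℝ),(0:ℝ)) (0,0,1))
        - (fderiv ℝ GQp ((0:ℝ),(0:ℝ),(0:ℝ)) (0,0,1) * GPq ((0:ℝ),(0:ℝ),(0:ℝ))
          + GQp ((0:ℝ),(0:ℝ),(0:ℝ)) * fderiv ℝ GPq ((0:ℝ),(0:ℝ),(0:ℝ)) (0,0,1)) = 0 := by
    rw [← hS.deriv, hsymp'.deriv_eq]
    simp
  have hDeDqP : De (Dq P) 0 0 0 = fderiv ℝ GPq ((0:ℝ),(0:ℝ),(0:ℝ)) (0,0,1) := by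
    have heq2 : (fun e => Dq P 0 0 e) =ᶠ[𝓝 (0:ℝ)] fun e => GPq ((0:ℝ), (0:ℝ), e) :=
      hWmem.mono (fun e he => eqDqP 0 0 e he)
    show deriv (fun s => Dq P 0 0 s) 0 = _
    rw [heq2.deriv_eq, (branch_slice3 (hGPqd _ hU0)).deriv]
  refine ⟨part1, part2, part3, ?_⟩
  rw [htrace, hDeDqP, ← hGQp0]
  rw [hGQq0, hGPp0, hGPq0] at h0
  linarith
end

section
/- (Proposition 2, part (a), in normalized coordinates.) Let (Q,P) be a symplectic family with a fixed point at the origin such that at the origin Q_q = 1, P_q = 0 and P_p = 1, and let A be a fixed point branch with q_A'(0) = p_A'(0) = 0. If Tr_A'(0) ≠ 0, then at the origin Q_p ≠ 0, P_qε ≠ 0, Q_ε = P_ε = 0 and P_εε = 0; in particular the coordinates are adapted and the Hessian matrix H = [[P_qq, P_qε],[P_qε, P_εε]] at the origin satisfies det H = −P_qε² < 0, so the origin is an indefinite rank-1-bifurcation point (a cross-bifurcation point). -/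
open Filter Topology Set

private lemma applyCLM (L : ℝ×ℝ×ℝ →L[ℝ] ℝ) (a b c : ℝ) :
    L (a,b,c) = a * L (1,0,0) + b * L (0,1,0) + c * L (0,0,1) := by
  have h : (a,b,c) = a • ((1:ℝ),(0:ℝ),(0:ℝ)) + b • ((0:ℝ),(1:ℝ),(0:ℝ))
      + c • ((0:ℝ),(0:ℝ),(1:ℝ)) := by simp [Prod.ext_iff]
  rw [h, map_add, map_add, map_smul, map_smul, map_smul]
  simp [smul_eq_mul]

private lemma lineq (p e : ℝ) (q : ℝ) :
    HasDerivAt (fun s : ℝ => (s, p, e)) ((1:ℝ), (0:ℝ), (0:ℝ)) q :=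
  (hasDerivAt_id q).prodMk ((hasDerivAt_const q p).prodMk (hasDerivAt_const q e))

private lemma linep (q e : ℝ) (p : ℝ) :
    HasDerivAt (fun s : ℝ => (q, s, e)) ((0:ℝ), (1:ℝ), (0:ℝ)) p :=
  (hasDerivAt_const p q).prodMk ((hasDerivAt_id p).prodMk (hasDerivAt_const p e))

private lemma linee (q p : ℝ) (e : ℝ) :
    HasDerivAt (fun s : ℝ => (q, p, s)) ((0:ℝ), (0:ℝ), (1:ℝ)) e :=
  (hasDerivAt_const e q).prodMk ((hasDerivAt_const e p).prodMk (hasDerivAt_id e))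

private lemma Dq_eq {f : ℝ → ℝ → ℝ → ℝ} {q p e : ℝ}
    (h : DifferentiableAt ℝ (fun z : ℝ × ℝ × ℝ => f z.1 z.2.1 z.2.2) (q,p,e)) :
    Dq f q p e = fderiv ℝ (fun z : ℝ × ℝ × ℝ => f z.1 z.2.1 z.2.2) (q,p,e) (1,0,0) :=
  (h.hasFDerivAt.comp_hasDerivAt (l := fun z : ℝ × ℝ × ℝ => f z.1 z.2.1 z.2.2) q (lineq p e q)).deriv

private lemma Dp_eq {f : ℝ → ℝ → ℝ → ℝ} {q p e : ℝ}
    (h : DifferentiableAt ℝ (fun z : ℝ × ℝ × ℝ => f z.1 z.2.1 z.2.2) (q,p,e)) :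
    Dp f q p e = fderiv ℝ (fun z : ℝ × ℝ × ℝ => f z.1 z.2.1 z.2.2) (q,p,e) (0,1,0) :=
  (h.hasFDerivAt.comp_hasDerivAt (l := fun z : ℝ × ℝ × ℝ => f z.1 z.2.1 z.2.2) p (linep q e p)).deriv

private lemma De_eq {f : ℝ → ℝ → ℝ → ℝ} {q p e : ℝ}
    (h : DifferentiableAt ℝ (fun z : ℝ × ℝ × ℝ => f z.1 z.2.1 z.2.2) (q,p,e)) :
    De f q p e = fderiv ℝ (fun z : ℝ × ℝ × ℝ => f z.1 z.2.1 z.2.2) (q,p,e) (0,0,1) :=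
  (h.hasFDerivAt.comp_hasDerivAt (l := fun z : ℝ × ℝ × ℝ => f z.1 z.2.1 z.2.2) e (linee q p e)).deriv


/-- **Proposition 2 (a), in normalized coordinates.**  If `A` is a fixed point branch
tangent to the `ε`-axis of a symplectic family with `Q_q = 1`, `P_q = 0`, `P_p = 1` at
the origin, and `Tr_A'(0) ≠ 0`, then the coordinates are adapted (`Q_p ≠ 0`,
`Q_ε = P_ε = 0` at the origin), `P_qε ≠ 0`, `P_εε = 0` at the origin, and the Hessian
determinant equals `−P_qε² < 0`: the origin is a cross-bifurcation point. -/
theorem nonzero_trace_derivative_gives_cross_bifurcation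
    (Q P : ℝ → ℝ → ℝ → ℝ) (U : Set (ℝ × ℝ × ℝ)) (hU : IsOpen U) (hU0 : (0, 0, 0) ∈ U)
    (hQ : ContDiffOn ℝ (⊤ : ℕ∞) (fun z : ℝ × ℝ × ℝ => Q z.1 z.2.1 z.2.2) U)
    (hP : ContDiffOn ℝ (⊤ : ℕ∞) (fun z : ℝ × ℝ × ℝ => P z.1 z.2.1 z.2.2) U)
    (hsymp : ∀ z ∈ U, Dq Q z.1 z.2.1 z.2.2 * Dp P z.1 z.2.1 z.2.2
      - Dp Q z.1 z.2.1 z.2.2 * Dq P z.1 z.2.1 z.2.2 = 1)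
    (hQ0 : Q 0 0 0 = 0) (hP0 : P 0 0 0 = 0)
    (hQq : Dq Q 0 0 0 = 1) (hPq : Dq P 0 0 0 = 0) (hPp : Dp P 0 0 0 = 1)
    (r : ℝ) (hr : 0 < r) (qA pA : ℝ → ℝ)
    (hqA : ContDiffOn ℝ (⊤ : ℕ∞) qA (Set.Ioo (-r) r)) (hpA : ContDiffOn ℝ (⊤ : ℕ∞) pA (Set.Ioo (-r) r))
    (hqA0 : qA 0 = 0) (hpA0 : pA 0 = 0)
    (hfix : ∀ e ∈ Set.Ioo (-r) r,
      Q (qA e) (pA e) e = qA e ∧ P (qA e) (pA e) e = pA e)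
    (hqA' : deriv qA 0 = 0) (hpA' : deriv pA 0 = 0)
    (hTr : deriv (fun e => Dq Q (qA e) (pA e) e + Dp P (qA e) (pA e) e) 0 ≠ 0) :
    Dp Q 0 0 0 ≠ 0 ∧ De (Dq P) 0 0 0 ≠ 0 ∧
    De Q 0 0 0 = 0 ∧ De P 0 0 0 = 0 ∧ De (De P) 0 0 0 = 0 ∧
    Dq (Dq P) 0 0 0 * De (De P) 0 0 0 - (De (Dq P) 0 0 0) ^ 2
      = -(De (Dq P) 0 0 0) ^ 2 ∧
    Dq (Dq P) 0 0 0 * De (De P) 0 0 0 - (De (Dq P) 0 0 0) ^ 2 < 0 := by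
  set FQ : ℝ × ℝ × ℝ → ℝ := fun z => Q z.1 z.2.1 z.2.2 with hFQdef
  set FP : ℝ × ℝ × ℝ → ℝ := fun z => P z.1 z.2.1 z.2.2 with hFPdef
  -- differentiability
  have hQdiff : ∀ z ∈ U, DifferentiableAt ℝ FQ z := fun z hz =>
    (hQ.contDiffAt (hU.mem_nhds hz)).differentiableAt (by simp)
  have hPdiff : ∀ z ∈ U, DifferentiableAt ℝ FP z := fun z hz =>
    (hP.contDiffAt (hU.mem_nhds hz)).differentiableAt (by simp)
  have hQ'cd : ContDiffOn ℝ (⊤ : ℕ∞) (fderiv ℝ FQ) U := hQ.fderiv_of_isOpen hU (by simp)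
  have hP'cd : ContDiffOn ℝ (⊤ : ℕ∞) (fderiv ℝ FP) U := hP.fderiv_of_isOpen hU (by simp)
  have hQ'diff : ∀ z ∈ U, DifferentiableAt ℝ (fderiv ℝ FQ) z := fun z hz =>
    (hQ'cd.contDiffAt (hU.mem_nhds hz)).differentiableAt (by simp)
  have hP'diff : ∀ z ∈ U, DifferentiableAt ℝ (fderiv ℝ FP) z := fun z hz =>
    (hP'cd.contDiffAt (hU.mem_nhds hz)).differentiableAt (by simp)
  have hd0Q : DifferentiableAt ℝ FQ (0,0,0) := hQdiff _ hU0
  have hd0P : DifferentiableAt ℝ FP (0,0,0) := hPdiff _ hU0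
  set a : ℝ × ℝ × ℝ →L[ℝ] ℝ := fderiv ℝ FQ (0,0,0) with hadef
  set b : ℝ × ℝ × ℝ →L[ℝ] ℝ := fderiv ℝ FP (0,0,0) with hbdef
  set A2 : ℝ × ℝ × ℝ →L[ℝ] ℝ := fderiv ℝ (fderiv ℝ FQ) (0,0,0) (0,0,1) with hA2def
  set B2 : ℝ × ℝ × ℝ →L[ℝ] ℝ := fderiv ℝ (fderiv ℝ FP) (0,0,0) (0,0,1) with hB2def
  have ha1 : a (1,0,0) = 1 := (Dq_eq hd0Q).symm.trans hQq
  have hb1 : b (1,0,0) = 0 := (Dq_eq hd0P).symm.trans hPq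
  have hb2 : b (0,1,0) = 1 := (Dp_eq hd0P).symm.trans hPp
  -- e-axis membership
  have memE : ∀ᶠ e in 𝓝 (0:ℝ), ((0:ℝ),(0:ℝ),e) ∈ U := by
    have hc : ContinuousAt (fun e : ℝ => ((0:ℝ),(0:ℝ),e)) 0 := by fun_prop
    exact hc (hU.mem_nhds hU0)
  -- derivatives of fderiv along e-axis
  have hQ'E : HasDerivAt (fun e : ℝ => fderiv ℝ FQ (0,0,e)) A2 0 :=
    (hQ'diff _ hU0).hasFDerivAt.comp_hasDerivAt 0 (linee 0 0 0)
  have hP'E : HasDerivAt (fun e : ℝ => fderiv ℝ FP (0,0,e)) B2 0 :=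
    (hP'diff _ hU0).hasFDerivAt.comp_hasDerivAt 0 (linee 0 0 0)
  have hApp : ∀ v : ℝ × ℝ × ℝ,
      HasDerivAt (fun e : ℝ => fderiv ℝ FQ (0,0,e) v) (A2 v) 0 := fun v => by
    simpa using hQ'E.clm_apply (hasDerivAt_const 0 v)
  have hBpp : ∀ v : ℝ × ℝ × ℝ,
      HasDerivAt (fun e : ℝ => fderiv ℝ FP (0,0,e) v) (B2 v) 0 := fun v => by
    simpa using hP'E.clm_apply (hasDerivAt_const 0 v)
  -- identification of the mixed second partials
  have hDeDq : De (Dq P) 0 0 0 = B2 (1,0,0) := by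
    have h1 : (fun e : ℝ => Dq P 0 0 e) =ᶠ[𝓝 0] fun e => fderiv ℝ FP (0,0,e) (1,0,0) :=
      memE.mono fun e he => Dq_eq (hPdiff _ he)
    exact h1.deriv_eq.trans (hBpp (1,0,0)).deriv
  have hDeDe : De (De P) 0 0 0 = B2 (0,0,1) := by
    have h1 : (fun e : ℝ => De P 0 0 e) =ᶠ[𝓝 0] fun e => fderiv ℝ FP (0,0,e) (0,0,1) :=
      memE.mono fun e he => De_eq (hPdiff _ he)
    exact h1.deriv_eq.trans (hBpp (0,0,1)).deriv
  -- symplectic identity differentiated along the e-axis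
  have hkey : A2 (1,0,0) * b (0,1,0) + a (1,0,0) * B2 (0,1,0)
      - (A2 (0,1,0) * b (1,0,0) + a (0,1,0) * B2 (1,0,0)) = 0 := by
    have hsympE : (fun e : ℝ => fderiv ℝ FQ (0,0,e) (1,0,0) * fderiv ℝ FP (0,0,e) (0,1,0)
        - fderiv ℝ FQ (0,0,e) (0,1,0) * fderiv ℝ FP (0,0,e) (1,0,0)) =ᶠ[𝓝 0]
        fun _ => (1:ℝ) :=
      memE.mono fun e he => by
        show fderiv ℝ FQ (0,0,e) (1,0,0) * fderiv ℝ FP (0,0,e) (0,1,0)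
          - fderiv ℝ FQ (0,0,e) (0,1,0) * fderiv ℝ FP (0,0,e) (1,0,0) = 1
        rw [← Dq_eq (hQdiff _ he), ← Dp_eq (hPdiff _ he), ← Dp_eq (hQdiff _ he),
          ← Dq_eq (hPdiff _ he)]
        exact hsymp ((0:ℝ),(0:ℝ),e) he
    have hg : HasDerivAt (fun e : ℝ => fderiv ℝ FQ (0,0,e) (1,0,0) * fderiv ℝ FP (0,0,e) (0,1,0)
        - fderiv ℝ FQ (0,0,e) (0,1,0) * fderiv ℝ FP (0,0,e) (1,0,0))
        (A2 (1,0,0) * b (0,1,0) + a (1,0,0) * B2 (0,1,0)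
          - (A2 (0,1,0) * b (1,0,0) + a (0,1,0) * B2 (1,0,0))) 0 :=
      ((hApp (1,0,0)).mul (hBpp (0,1,0))).sub ((hApp (0,1,0)).mul (hBpp (1,0,0)))
    have h1 := hg.deriv
    rw [hsympE.deriv_eq, deriv_const] at h1
    exact h1.symm
  -- the branch
  have hIoo : Set.Ioo (-r) r ∈ 𝓝 (0:ℝ) :=
    isOpen_Ioo.mem_nhds ⟨by linarith, hr⟩
  have hIooE : ∀ᶠ e in 𝓝 (0:ℝ), e ∈ Set.Ioo (-r) r := hIoo
  have hqAd : ∀ e ∈ Set.Ioo (-r) r, DifferentiableAt ℝ qA e := fun e he =>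
    (hqA.contDiffAt (isOpen_Ioo.mem_nhds he)).differentiableAt (by simp)
  have hpAd : ∀ e ∈ Set.Ioo (-r) r, DifferentiableAt ℝ pA e := fun e he =>
    (hpA.contDiffAt (isOpen_Ioo.mem_nhds he)).differentiableAt (by simp)
  have h0mem : (0:ℝ) ∈ Set.Ioo (-r) r := ⟨by linarith, hr⟩
  have hγe : ∀ e ∈ Set.Ioo (-r) r, HasDerivAt (fun t => (qA t, pA t, t))
      (deriv qA e, deriv pA e, 1) e := fun e he =>
    ((hqAd e he).hasDerivAt).prodMk (((hpAd e he).hasDerivAt).prodMk (hasDerivAt_id e))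
  have hγ0 : HasDerivAt (fun t => (qA t, pA t, t)) ((0:ℝ),(0:ℝ),(1:ℝ)) 0 := by
    have h1 := hγe 0 h0mem
    rwa [hqA', hpA'] at h1
  have hγ00 : (fun t => (qA t, pA t, t)) 0 = ((0:ℝ),(0:ℝ),(0:ℝ)) := by simp [hqA0, hpA0]
  -- open set around 0 where everything holds
  have hγcont : ContinuousOn (fun t => (qA t, pA t, t)) (Set.Ioo (-r) r) :=
    (hqA.continuousOn.prodMk (hpA.continuousOn.prodMk continuousOn_id))
  have hSopen : IsOpen (Set.Ioo (-r) r ∩ (fun t => (qA t, pA t, t)) ⁻¹' U) :=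
    hγcont.isOpen_inter_preimage isOpen_Ioo hU
  have h0S : (0:ℝ) ∈ Set.Ioo (-r) r ∩ (fun t => (qA t, pA t, t)) ⁻¹' U := by
    refine ⟨h0mem, ?_⟩
    simp only [Set.mem_preimage, hγ00]
    exact hU0
  have memγ : ∀ᶠ e in 𝓝 (0:ℝ), (qA e, pA e, e) ∈ U :=
    (hSopen.eventually_mem h0S).mono fun e he => he.2
  -- first derivatives in e vanish: De Q = De P = 0 at origin
  have hQcomp : HasDerivAt (fun e => FQ (qA e, pA e, e)) (a (0,0,1)) 0 :=
    hd0Q.hasFDerivAt.comp_hasDerivAt_of_eq 0 hγ0 hγ00.symm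
  have hPcomp : HasDerivAt (fun e => FP (qA e, pA e, e)) (b (0,0,1)) 0 :=
    hd0P.hasFDerivAt.comp_hasDerivAt_of_eq 0 hγ0 hγ00.symm
  have hQfixE : (fun e => FQ (qA e, pA e, e)) =ᶠ[𝓝 (0:ℝ)] qA :=
    hIooE.mono fun e he => (hfix e he).1
  have hPfixE : (fun e => FP (qA e, pA e, e)) =ᶠ[𝓝 (0:ℝ)] pA :=
    hIooE.mono fun e he => (hfix e he).2
  have ha3 : a (0,0,1) = 0 := hQcomp.deriv.symm.trans (hQfixE.deriv_eq.trans hqA')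
  have hb3 : b (0,0,1) = 0 := hPcomp.deriv.symm.trans (hPfixE.deriv_eq.trans hpA')
  -- trace derivative
  have hQ'γ : HasDerivAt (fun e => fderiv ℝ FQ (qA e, pA e, e)) A2 0 :=
    (hQ'diff _ hU0).hasFDerivAt.comp_hasDerivAt_of_eq 0 hγ0 hγ00.symm
  have hP'γ : HasDerivAt (fun e => fderiv ℝ FP (qA e, pA e, e)) B2 0 :=
    (hP'diff _ hU0).hasFDerivAt.comp_hasDerivAt_of_eq 0 hγ0 hγ00.symm
  have hTrE : (fun e => Dq Q (qA e) (pA e) e + Dp P (qA e) (pA e) e) =ᶠ[𝓝 (0:ℝ)]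
      fun e => fderiv ℝ FQ (qA e, pA e, e) (1,0,0) + fderiv ℝ FP (qA e, pA e, e) (0,1,0) :=
    memγ.mono fun e he => by
      show Dq Q (qA e) (pA e) e + Dp P (qA e) (pA e) e = _
      rw [Dq_eq (hQdiff _ he), Dp_eq (hPdiff _ he)]
  have hTrd : HasDerivAt (fun e => fderiv ℝ FQ (qA e, pA e, e) (1,0,0)
      + fderiv ℝ FP (qA e, pA e, e) (0,1,0)) (A2 (1,0,0) + B2 (0,1,0)) 0 := by
    have h1 := hQ'γ.clm_apply (hasDerivAt_const 0 ((1:ℝ),(0:ℝ),(0:ℝ)))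
    have h2 := hP'γ.clm_apply (hasDerivAt_const 0 ((0:ℝ),(1:ℝ),(0:ℝ)))
    have h3 := h1.add h2
    simp only [map_zero, add_zero] at h3
    exact h3
  have hTrval : A2 (1,0,0) + B2 (0,1,0) ≠ 0 := by
    rw [← hTrd.deriv, ← hTrE.deriv_eq]
    exact hTr
  have hprod : a (0,1,0) * B2 (1,0,0) ≠ 0 := by
    intro h
    apply hTrval
    rw [hb2, ha1, hb1] at hkey
    linarith [hkey]
  have haP : a (0,1,0) ≠ 0 := fun h => hprod (by rw [h, zero_mul])
  have hB21 : B2 (1,0,0) ≠ 0 := fun h => hprod (by rw [h, mul_zero])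
  -- second derivative along the branch : B2 (0,0,1) = 0
  have hB23 : B2 (0,0,1) = 0 := by
    have hderivq : DifferentiableAt ℝ (deriv qA) 0 :=
      ((hqA.deriv_of_isOpen (m := (⊤ : ℕ∞)) isOpen_Ioo (by simp)).contDiffAt
        (isOpen_Ioo.mem_nhds h0mem)).differentiableAt (by simp)
    have hderivp : DifferentiableAt ℝ (deriv pA) 0 :=
      ((hpA.deriv_of_isOpen (m := (⊤ : ℕ∞)) isOpen_Ioo (by simp)).contDiffAt
        (isOpen_Ioo.mem_nhds h0mem)).differentiableAt (by simp)
    have hEq : (deriv pA) =ᶠ[𝓝 (0:ℝ)] fun e =>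
        fderiv ℝ FP (qA e, pA e, e) (deriv qA e, deriv pA e, 1) := by
      refine (hSopen.eventually_mem h0S).mono fun e he => ?_
      have hcomp : HasDerivAt (fun t => FP (qA t, pA t, t))
          (fderiv ℝ FP (qA e, pA e, e) (deriv qA e, deriv pA e, 1)) e :=
        (hPdiff _ he.2).hasFDerivAt.comp_hasDerivAt (l := FP) e (hγe e he.1)
      have hloc : (fun t => FP (qA t, pA t, t)) =ᶠ[𝓝 e] pA :=
        eventually_of_mem (isOpen_Ioo.mem_nhds he.1) fun t ht => (hfix t ht).2
      show deriv pA e = fderiv ℝ FP (qA e, pA e, e) (deriv qA e, deriv pA e, 1)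
      rw [← hcomp.deriv, hloc.deriv_eq]
    have hu : HasDerivAt (fun e => ((deriv qA e, deriv pA e, 1) : ℝ × ℝ × ℝ))
        (deriv (deriv qA) 0, deriv (deriv pA) 0, 0) 0 :=
      (hderivq.hasDerivAt).prodMk ((hderivp.hasDerivAt).prodMk (hasDerivAt_const 0 1))
    have hRHS : HasDerivAt (fun e =>
        fderiv ℝ FP (qA e, pA e, e) (deriv qA e, deriv pA e, 1))
        (B2 (deriv qA 0, deriv pA 0, 1)
          + b (deriv (deriv qA) 0, deriv (deriv pA) 0, 0)) 0 := by
      have := hP'γ.clm_apply hu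
      simpa [hγ00] using this
    have h2 : deriv (deriv pA) 0 = B2 (deriv qA 0, deriv pA 0, 1)
        + b (deriv (deriv qA) 0, deriv (deriv pA) 0, 0) :=
      hEq.deriv_eq.trans hRHS.deriv
    rw [hqA', hpA'] at h2
    have e2 := applyCLM b (deriv (deriv qA) 0) (deriv (deriv pA) 0) 0
    rw [hb1, hb2] at e2
    simp only [zero_mul, mul_zero, mul_one, one_mul, add_zero, zero_add] at e2
    rw [e2] at h2
    linarith
  -- assemble
  have g3 : De Q 0 0 0 = 0 := (De_eq hd0Q).trans ha3
  have g4 : De P 0 0 0 = 0 := (De_eq hd0P).trans hb3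
  have g5 : De (De P) 0 0 0 = 0 := hDeDe.trans hB23
  have g1 : Dp Q 0 0 0 ≠ 0 := by rw [Dp_eq hd0Q]; exact haP
  have g2 : De (Dq P) 0 0 0 ≠ 0 := by rw [hDeDq]; exact hB21
  refine ⟨g1, g2, g3, g4, g5, by rw [g5]; ring, ?_⟩
  rw [g5, mul_zero, zero_sub]
  have : 0 < (De (Dq P) 0 0 0) ^ 2 :=
    lt_of_le_of_ne (sq_nonneg _) (Ne.symm (pow_ne_zero 2 g2))
  linarith
end

section
/- (Proposition 2, part (b).) Let (Q,P) be a symplectic family with a fixed point at the origin in adapted coordinates, suppose the bifurcation is indefinite (a cross-bifurcation), i.e. P_qq·P_εε − P_qε² < 0 at the origin, and let A be a fixed point branch through the origin. Then Tr_A'(0) ≠ 0. -/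
lemma hasDerivAt_slice_q {f : ℝ → ℝ → ℝ → ℝ} {q p e : ℝ}
    (hf : DifferentiableAt ℝ (fun z : ℝ × ℝ × ℝ => f z.1 z.2.1 z.2.2) (q, p, e)) :
    HasDerivAt (fun s => f s p e)
      (fderiv ℝ (fun z : ℝ × ℝ × ℝ => f z.1 z.2.1 z.2.2) (q, p, e) (1, 0, 0)) q := by
  have hσ : HasDerivAt (fun s : ℝ => ((s, p, e) : ℝ × ℝ × ℝ)) (1, 0, 0) q :=
    (hasDerivAt_id q).prodMk ((hasDerivAt_const q p).prodMk (hasDerivAt_const q e))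
  exact hf.hasFDerivAt.comp_hasDerivAt q hσ

lemma hasDerivAt_slice_p {f : ℝ → ℝ → ℝ → ℝ} {q p e : ℝ}
    (hf : DifferentiableAt ℝ (fun z : ℝ × ℝ × ℝ => f z.1 z.2.1 z.2.2) (q, p, e)) :
    HasDerivAt (fun s => f q s e)
      (fderiv ℝ (fun z : ℝ × ℝ × ℝ => f z.1 z.2.1 z.2.2) (q, p, e) (0, 1, 0)) p := by
  have hσ : HasDerivAt (fun s : ℝ => ((q, s, e) : ℝ × ℝ × ℝ)) (0, 1, 0) p :=
    (hasDerivAt_const p q).prodMk ((hasDerivAt_id p).prodMk (hasDerivAt_const p e))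
  exact hf.hasFDerivAt.comp_hasDerivAt p hσ

lemma hasDerivAt_slice_e {f : ℝ → ℝ → ℝ → ℝ} {q p e : ℝ}
    (hf : DifferentiableAt ℝ (fun z : ℝ × ℝ × ℝ => f z.1 z.2.1 z.2.2) (q, p, e)) :
    HasDerivAt (fun s => f q p s)
      (fderiv ℝ (fun z : ℝ × ℝ × ℝ => f z.1 z.2.1 z.2.2) (q, p, e) (0, 0, 1)) e := by
  have hσ : HasDerivAt (fun s : ℝ => ((q, p, s) : ℝ × ℝ × ℝ)) (0, 0, 1) e :=
    (hasDerivAt_const e q).prodMk ((hasDerivAt_const e p).prodMk (hasDerivAt_id e))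
  exact hf.hasFDerivAt.comp_hasDerivAt e hσ

lemma hasDerivAt_curve {f : ℝ → ℝ → ℝ → ℝ} {x y : ℝ → ℝ} {t a b : ℝ}
    (hf : DifferentiableAt ℝ (fun z : ℝ × ℝ × ℝ => f z.1 z.2.1 z.2.2) (x t, y t, t))
    (hx : HasDerivAt x a t) (hy : HasDerivAt y b t) :
    HasDerivAt (fun s => f (x s) (y s) s)
      (a * Dq f (x t) (y t) t + b * Dp f (x t) (y t) t + De f (x t) (y t) t) t := by
  have hγ : HasDerivAt (fun s : ℝ => ((x s, y s, s) : ℝ × ℝ × ℝ)) (a, b, 1) t :=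
    hx.prodMk (hy.prodMk (hasDerivAt_id t))
  have h := hf.hasFDerivAt.comp_hasDerivAt t hγ
  have hdq := (hasDerivAt_slice_q hf).deriv
  have hdp := (hasDerivAt_slice_p hf).deriv
  have hde := (hasDerivAt_slice_e hf).deriv
  have hv : ((a, b, (1:ℝ)) : ℝ × ℝ × ℝ)
      = a • ((1:ℝ), (0:ℝ), (0:ℝ)) + b • ((0:ℝ), (1:ℝ), (0:ℝ)) + ((0:ℝ), (0:ℝ), (1:ℝ)) := by
    simp [Prod.ext_iff]
  have key : fderiv ℝ (fun z : ℝ × ℝ × ℝ => f z.1 z.2.1 z.2.2) (x t, y t, t) (a, b, 1)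
      = a * Dq f (x t) (y t) t + b * Dp f (x t) (y t) t + De f (x t) (y t) t := by
    rw [hv, map_add, map_add, map_smul, map_smul]
    simp only [smul_eq_mul]
    rw [show Dq f (x t) (y t) t = deriv (fun s => f s (y t) t) (x t) from rfl,
        show Dp f (x t) (y t) t = deriv (fun s => f (x t) s t) (y t) from rfl,
        show De f (x t) (y t) t = deriv (fun s => f (x t) (y t) s) t from rfl,
        ← hdq, ← hdp, ← hde]
  rw [key] at h
  exact h

lemma partial_diff {f : ℝ → ℝ → ℝ → ℝ} {U : Set (ℝ × ℝ × ℝ)} (hU : IsOpen U)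
    (hf : ContDiffOn ℝ (⊤ : ℕ∞) (fun z : ℝ × ℝ × ℝ => f z.1 z.2.1 z.2.2) U)
    {z : ℝ × ℝ × ℝ} (hz : z ∈ U) {g : ℝ × ℝ × ℝ → ℝ} {v : ℝ × ℝ × ℝ}
    (hg : ∀ w ∈ U, g w = fderiv ℝ (fun z : ℝ × ℝ × ℝ => f z.1 z.2.1 z.2.2) w v) :
    DifferentiableAt ℝ g z ∧ ∀ w : ℝ × ℝ × ℝ, fderiv ℝ g z w =
      fderiv ℝ (fderiv ℝ (fun z : ℝ × ℝ × ℝ => f z.1 z.2.1 z.2.2)) z w v := by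
  set F := fun z : ℝ × ℝ × ℝ => f z.1 z.2.1 z.2.2 with hF
  have hF' : ContDiffOn ℝ (⊤ : ℕ∞) (fderiv ℝ F) U := hf.fderiv_of_isOpen hU (by simp)
  have hGv : ContDiffOn ℝ (⊤ : ℕ∞) (fun w => fderiv ℝ F w v) U := hF'.clm_apply contDiffOn_const
  have hdGv : DifferentiableAt ℝ (fun w => fderiv ℝ F w v) z :=
    (hGv.contDiffAt (hU.mem_nhds hz)).differentiableAt (by simp)
  have heq : g =ᶠ[nhds z] fun w => fderiv ℝ F w v :=
    Filter.eventuallyEq_of_mem (hU.mem_nhds hz) hg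
  have hdg : DifferentiableAt ℝ g z := hdGv.congr_of_eventuallyEq heq
  have hfe : fderiv ℝ g z = fderiv ℝ (fun w => fderiv ℝ F w v) z := heq.fderiv_eq
  have hdF' : DifferentiableAt ℝ (fderiv ℝ F) z :=
    (hF'.contDiffAt (hU.mem_nhds hz)).differentiableAt (by simp)
  refine ⟨hdg, fun w => ?_⟩
  rw [hfe, fderiv_clm_apply hdF' (differentiableAt_const v)]
  simp

/-- **Proposition 2 (b).**  At a cross-bifurcation in adapted coordinates
(`P_qq·P_εε − P_qε² < 0` at the origin), every fixed point branch `A` through the origin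
satisfies `Tr_A'(0) ≠ 0`. -/
theorem cross_bifurcation_trace_derivative_ne_zero
    (Q P : ℝ → ℝ → ℝ → ℝ) (U : Set (ℝ × ℝ × ℝ)) (hU : IsOpen U) (hU0 : (0, 0, 0) ∈ U)
    (hQ : ContDiffOn ℝ (⊤ : ℕ∞) (fun z : ℝ × ℝ × ℝ => Q z.1 z.2.1 z.2.2) U)
    (hP : ContDiffOn ℝ (⊤ : ℕ∞) (fun z : ℝ × ℝ × ℝ => P z.1 z.2.1 z.2.2) U)
    (hsymp : ∀ z ∈ U, Dq Q z.1 z.2.1 z.2.2 * Dp P z.1 z.2.1 z.2.2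
      - Dp Q z.1 z.2.1 z.2.2 * Dq P z.1 z.2.1 z.2.2 = 1)
    (hQ0 : Q 0 0 0 = 0) (hP0 : P 0 0 0 = 0)
    (hQq : Dq Q 0 0 0 = 1) (hPq : Dq P 0 0 0 = 0) (hPp : Dp P 0 0 0 = 1)
    (hQe : De Q 0 0 0 = 0) (hPe : De P 0 0 0 = 0) (hQp : Dp Q 0 0 0 ≠ 0)
    (hindef : Dq (Dq P) 0 0 0 * De (De P) 0 0 0 - (De (Dq P) 0 0 0) ^ 2 < 0)
    (r : ℝ) (hr : 0 < r) (qA pA : ℝ → ℝ)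
    (hqA : ContDiffOn ℝ (⊤ : ℕ∞) qA (Set.Ioo (-r) r)) (hpA : ContDiffOn ℝ (⊤ : ℕ∞) pA (Set.Ioo (-r) r))
    (hqA0 : qA 0 = 0) (hpA0 : pA 0 = 0)
    (hfix : ∀ e ∈ Set.Ioo (-r) r,
      Q (qA e) (pA e) e = qA e ∧ P (qA e) (pA e) e = pA e) :
    deriv (fun e => Dq Q (qA e) (pA e) e + Dp P (qA e) (pA e) e) 0 ≠ 0 := by
  have h0I : (0:ℝ) ∈ Set.Ioo (-r) r := ⟨by linarith, hr⟩
  have hIoo : IsOpen (Set.Ioo (-r) r) := isOpen_Ioo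
  have hpt : ((qA 0, pA 0, (0:ℝ)) : ℝ × ℝ × ℝ) = ((0:ℝ), (0:ℝ), (0:ℝ)) := by
    rw [hqA0, hpA0]
  -- branch regularity
  have hqAd : ∀ e ∈ Set.Ioo (-r) r, DifferentiableAt ℝ qA e := fun e he =>
    (hqA.contDiffAt (hIoo.mem_nhds he)).differentiableAt (by simp)
  have hpAd : ∀ e ∈ Set.Ioo (-r) r, DifferentiableAt ℝ pA e := fun e he =>
    (hpA.contDiffAt (hIoo.mem_nhds he)).differentiableAt (by simp)
  have hqA' : HasDerivAt qA (deriv qA 0) 0 := (hqAd 0 h0I).hasDerivAt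
  have hpA' : HasDerivAt pA (deriv pA 0) 0 := (hpAd 0 h0I).hasDerivAt
  have hq2 : HasDerivAt (deriv qA) (deriv (deriv qA) 0) 0 :=
    ((((hqA.deriv_of_isOpen hIoo (by simp) : ContDiffOn ℝ (⊤ : ℕ∞) (deriv qA) _)).contDiffAt
      (hIoo.mem_nhds h0I)).differentiableAt (by simp)).hasDerivAt
  have hp2 : HasDerivAt (deriv pA) (deriv (deriv pA) 0) 0 :=
    ((((hpA.deriv_of_isOpen hIoo (by simp) : ContDiffOn ℝ (⊤ : ℕ∞) (deriv pA) _)).contDiffAt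
      (hIoo.mem_nhds h0I)).differentiableAt (by simp)).hasDerivAt
  -- joint differentiability
  have hQdU : ∀ w ∈ U, DifferentiableAt ℝ (fun z : ℝ × ℝ × ℝ => Q z.1 z.2.1 z.2.2) w :=
    fun w hw => (hQ.contDiffAt (hU.mem_nhds hw)).differentiableAt (by simp)
  have hPdU : ∀ w ∈ U, DifferentiableAt ℝ (fun z : ℝ × ℝ × ℝ => P z.1 z.2.1 z.2.2) w :=
    fun w hw => (hP.contDiffAt (hU.mem_nhds hw)).differentiableAt (by simp)
  -- p'(0) = 0
  have hb : deriv pA 0 = 0 := by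
    have hC : HasDerivAt (fun e => Q (qA e) (pA e) e)
        (deriv qA 0 * Dq Q 0 0 0 + deriv pA 0 * Dp Q 0 0 0 + De Q 0 0 0) 0 := by
      have h := hasDerivAt_curve (f := Q) (x := qA) (y := pA) (t := 0)
        (by rw [hpt]; exact hQdU _ hU0) hqA' hpA'
      rwa [hqA0, hpA0] at h
    have heq : (fun e => Q (qA e) (pA e) e) =ᶠ[nhds (0:ℝ)] qA :=
      Filter.eventuallyEq_of_mem (Ioo_mem_nhds (by linarith) hr) (fun e he => (hfix e he).1)
    have huni := (hC.congr_of_eventuallyEq heq.symm).unique hqA'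
    rw [hQq, hQe] at huni
    have : deriv pA 0 * Dp Q 0 0 0 = 0 := by linarith
    rcases mul_eq_zero.1 this with h | h
    · exact h
    · exact absurd h hQp
  -- the six first-order partials of Q and P, as nice functions on U
  obtain ⟨hdQq, hfQq⟩ := partial_diff (f := Q)
    (g := fun z : ℝ × ℝ × ℝ => Dq Q z.1 z.2.1 z.2.2) hU hQ hU0
    (fun w hw => (hasDerivAt_slice_q (hQdU w hw)).deriv)
  obtain ⟨hdQp, hfQp⟩ := partial_diff (f := Q)
    (g := fun z : ℝ × ℝ × ℝ => Dp Q z.1 z.2.1 z.2.2) hU hQ hU0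
    (fun w hw => (hasDerivAt_slice_p (hQdU w hw)).deriv)
  obtain ⟨hdQe, hfQe⟩ := partial_diff (f := Q)
    (g := fun z : ℝ × ℝ × ℝ => De Q z.1 z.2.1 z.2.2) hU hQ hU0
    (fun w hw => (hasDerivAt_slice_e (hQdU w hw)).deriv)
  obtain ⟨hdPq, hfPq⟩ := partial_diff (f := P)
    (g := fun z : ℝ × ℝ × ℝ => Dq P z.1 z.2.1 z.2.2) hU hP hU0
    (fun w hw => (hasDerivAt_slice_q (hPdU w hw)).deriv)
  obtain ⟨hdPp, hfPp⟩ := partial_diff (f := P)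
    (g := fun z : ℝ × ℝ × ℝ => Dp P z.1 z.2.1 z.2.2) hU hP hU0
    (fun w hw => (hasDerivAt_slice_p (hPdU w hw)).deriv)
  obtain ⟨hdPe, hfPe⟩ := partial_diff (f := P)
    (g := fun z : ℝ × ℝ × ℝ => De P z.1 z.2.1 z.2.2) hU hP hU0
    (fun w hw => (hasDerivAt_slice_e (hPdU w hw)).deriv)
  -- Clairaut for P at the origin
  have hswap : fderiv ℝ (fderiv ℝ (fun z : ℝ × ℝ × ℝ => P z.1 z.2.1 z.2.2)) (0, 0, 0)
        ((1:ℝ), (0:ℝ), (0:ℝ)) ((0:ℝ), (0:ℝ), (1:ℝ))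
      = fderiv ℝ (fderiv ℝ (fun z : ℝ × ℝ × ℝ => P z.1 z.2.1 z.2.2)) (0, 0, 0)
        ((0:ℝ), (0:ℝ), (1:ℝ)) ((1:ℝ), (0:ℝ), (0:ℝ)) := by
    have hev : ∀ᶠ w in nhds (((0:ℝ), (0:ℝ), (0:ℝ)) : ℝ × ℝ × ℝ),
        HasFDerivAt (fun z : ℝ × ℝ × ℝ => P z.1 z.2.1 z.2.2)
          (fderiv ℝ (fun z : ℝ × ℝ × ℝ => P z.1 z.2.1 z.2.2) w) w := by
      filter_upwards [hU.mem_nhds hU0] with w hw using (hPdU w hw).hasFDerivAt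
    have hdFP' : HasFDerivAt (fderiv ℝ (fun z : ℝ × ℝ × ℝ => P z.1 z.2.1 z.2.2))
        (fderiv ℝ (fderiv ℝ (fun z : ℝ × ℝ × ℝ => P z.1 z.2.1 z.2.2)) (0, 0, 0)) (0, 0, 0) :=
      (((hP.fderiv_of_isOpen hU (m := (⊤ : ℕ∞)) (by simp)).contDiffAt
        (hU.mem_nhds hU0)).differentiableAt (by simp)).hasFDerivAt
    exact second_derivative_symmetric_of_eventually hev hdFP' _ _
  -- mixed partial symmetry in Dq/De language
  have hmix : Dq (De P) 0 0 0 = De (Dq P) 0 0 0 := by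
    have h1 : Dq (De P) 0 0 0
        = fderiv ℝ (fun z : ℝ × ℝ × ℝ => De P z.1 z.2.1 z.2.2) (0, 0, 0) (1, 0, 0) :=
      (hasDerivAt_slice_q (f := De P) hdPe).deriv
    have h2 : De (Dq P) 0 0 0
        = fderiv ℝ (fun z : ℝ × ℝ × ℝ => Dq P z.1 z.2.1 z.2.2) (0, 0, 0) (0, 0, 1) :=
      (hasDerivAt_slice_e (f := Dq P) hdPq).deriv
    rw [h1, h2, hfPe (1, 0, 0), hfPq (0, 0, 1), hswap]
  -- the quadratic relation  α a² + 2 β a + γ = 0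
  have hγc : ContinuousAt (fun e : ℝ => ((qA e, pA e, e) : ℝ × ℝ × ℝ)) 0 :=
    (hqAd 0 h0I).continuousAt.prodMk ((hpAd 0 h0I).continuousAt.prodMk continuousAt_id)
  have hnear : ∀ᶠ e in nhds (0:ℝ),
      ((qA e, pA e, e) : ℝ × ℝ × ℝ) ∈ U ∧ e ∈ Set.Ioo (-r) r := by
    have h1 : ∀ᶠ e in nhds (0:ℝ), ((qA e, pA e, e) : ℝ × ℝ × ℝ) ∈ U := by
      have := hγc.preimage_mem_nhds (show U ∈ nhds ((qA 0, pA 0, (0:ℝ)) : ℝ × ℝ × ℝ) by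
        rw [hpt]; exact hU.mem_nhds hU0)
      exact Filter.eventually_of_mem this (fun e he => he)
    have h2 : ∀ᶠ e in nhds (0:ℝ), e ∈ Set.Ioo (-r) r :=
      Filter.eventually_of_mem (Ioo_mem_nhds (by linarith) hr) (fun e he => he)
    exact h1.and h2
  have hGzero : (fun e => deriv qA e * Dq P (qA e) (pA e) e
        + deriv pA e * Dp P (qA e) (pA e) e
        + De P (qA e) (pA e) e - deriv pA e) =ᶠ[nhds (0:ℝ)] (fun _ => (0:ℝ)) := by
    filter_upwards [hnear] with e he
    obtain ⟨hinU, heI⟩ := he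
    have hC : HasDerivAt (fun t => P (qA t) (pA t) t)
        (deriv qA e * Dq P (qA e) (pA e) e + deriv pA e * Dp P (qA e) (pA e) e
          + De P (qA e) (pA e) e) e :=
      hasDerivAt_curve (hPdU _ hinU) (hqAd e heI).hasDerivAt (hpAd e heI).hasDerivAt
    have heq : (fun t => P (qA t) (pA t) t) =ᶠ[nhds e] pA :=
      Filter.eventuallyEq_of_mem (hIoo.mem_nhds heI) (fun t ht => (hfix t ht).2)
    have huni := (hC.congr_of_eventuallyEq heq.symm).unique (hpAd e heI).hasDerivAt
    linarith
  have hC1 : HasDerivAt (fun e => Dq P (qA e) (pA e) e)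
      (deriv qA 0 * Dq (Dq P) 0 0 0 + deriv pA 0 * Dp (Dq P) 0 0 0 + De (Dq P) 0 0 0) 0 := by
    have h := hasDerivAt_curve (f := Dq P) (x := qA) (y := pA) (t := 0)
      (by rw [hpt]; exact hdPq) hqA' hpA'
    rwa [hqA0, hpA0] at h
  have hC2 : HasDerivAt (fun e => Dp P (qA e) (pA e) e)
      (deriv qA 0 * Dq (Dp P) 0 0 0 + deriv pA 0 * Dp (Dp P) 0 0 0 + De (Dp P) 0 0 0) 0 := by
    have h := hasDerivAt_curve (f := Dp P) (x := qA) (y := pA) (t := 0)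
      (by rw [hpt]; exact hdPp) hqA' hpA'
    rwa [hqA0, hpA0] at h
  have hC3 : HasDerivAt (fun e => De P (qA e) (pA e) e)
      (deriv qA 0 * Dq (De P) 0 0 0 + deriv pA 0 * Dp (De P) 0 0 0 + De (De P) 0 0 0) 0 := by
    have h := hasDerivAt_curve (f := De P) (x := qA) (y := pA) (t := 0)
      (by rw [hpt]; exact hdPe) hqA' hpA'
    rwa [hqA0, hpA0] at h
  have hG' := (((hq2.mul hC1).add (hp2.mul hC2)).add hC3).sub hp2
  have hquad0 := (hG'.congr_of_eventuallyEq hGzero.symm).unique (hasDerivAt_const 0 0)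
  simp only [hqA0, hpA0, hb, hPq, hPp, hmix] at hquad0
  -- hquad0 : quadratic relation (with deriv pA 0 = 0 substituted)
  -- symplectic identity, differentiated in q and in ε at the origin
  have hlinq : ∀ᶠ t in nhds (0:ℝ), ((t, (0:ℝ), (0:ℝ)) : ℝ × ℝ × ℝ) ∈ U := by
    have hc : ContinuousAt (fun t : ℝ => ((t, (0:ℝ), (0:ℝ)) : ℝ × ℝ × ℝ)) 0 :=
      continuousAt_id.prodMk continuousAt_const
    exact Filter.eventually_of_mem (hc.preimage_mem_nhds (hU.mem_nhds hU0)) (fun t ht => ht)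
  have hline : ∀ᶠ t in nhds (0:ℝ), (((0:ℝ), (0:ℝ), t) : ℝ × ℝ × ℝ) ∈ U := by
    have hc : ContinuousAt (fun t : ℝ => (((0:ℝ), (0:ℝ), t) : ℝ × ℝ × ℝ)) 0 :=
      continuousAt_const.prodMk (continuousAt_const.prodMk continuousAt_id)
    exact Filter.eventually_of_mem (hc.preimage_mem_nhds (hU.mem_nhds hU0)) (fun t ht => ht)
  have hS1 : (fun t => Dq Q t 0 0 * Dp P t 0 0 - Dp Q t 0 0 * Dq P t 0 0)
      =ᶠ[nhds (0:ℝ)] (fun _ => (1:ℝ)) := by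
    filter_upwards [hlinq] with t ht using hsymp _ ht
  have hS3 : (fun t => Dq Q 0 0 t * Dp P 0 0 t - Dp Q 0 0 t * Dq P 0 0 t)
      =ᶠ[nhds (0:ℝ)] (fun _ => (1:ℝ)) := by
    filter_upwards [hline] with t ht using hsymp _ ht
  -- slice derivatives of the first partials at the origin, in Dq/De language
  have eQqq : Dq (Dq Q) 0 0 0
      = fderiv ℝ (fun z : ℝ × ℝ × ℝ => Dq Q z.1 z.2.1 z.2.2) (0, 0, 0) (1, 0, 0) :=
    (hasDerivAt_slice_q (f := Dq Q) hdQq).deriv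
  have eQpq : Dq (Dp Q) 0 0 0
      = fderiv ℝ (fun z : ℝ × ℝ × ℝ => Dp Q z.1 z.2.1 z.2.2) (0, 0, 0) (1, 0, 0) :=
    (hasDerivAt_slice_q (f := Dp Q) hdQp).deriv
  have ePqq : Dq (Dq P) 0 0 0
      = fderiv ℝ (fun z : ℝ × ℝ × ℝ => Dq P z.1 z.2.1 z.2.2) (0, 0, 0) (1, 0, 0) :=
    (hasDerivAt_slice_q (f := Dq P) hdPq).deriv
  have ePpq : Dq (Dp P) 0 0 0
      = fderiv ℝ (fun z : ℝ × ℝ × ℝ => Dp P z.1 z.2.1 z.2.2) (0, 0, 0) (1, 0, 0) :=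
    (hasDerivAt_slice_q (f := Dp P) hdPp).deriv
  have eQqe : De (Dq Q) 0 0 0
      = fderiv ℝ (fun z : ℝ × ℝ × ℝ => Dq Q z.1 z.2.1 z.2.2) (0, 0, 0) (0, 0, 1) :=
    (hasDerivAt_slice_e (f := Dq Q) hdQq).deriv
  have eQpe : De (Dp Q) 0 0 0
      = fderiv ℝ (fun z : ℝ × ℝ × ℝ => Dp Q z.1 z.2.1 z.2.2) (0, 0, 0) (0, 0, 1) :=
    (hasDerivAt_slice_e (f := Dp Q) hdQp).deriv
  have ePqe : De (Dq P) 0 0 0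
      = fderiv ℝ (fun z : ℝ × ℝ × ℝ => Dq P z.1 z.2.1 z.2.2) (0, 0, 0) (0, 0, 1) :=
    (hasDerivAt_slice_e (f := Dq P) hdPq).deriv
  have ePpe : De (Dp P) 0 0 0
      = fderiv ℝ (fun z : ℝ × ℝ × ℝ => Dp P z.1 z.2.1 z.2.2) (0, 0, 0) (0, 0, 1) :=
    (hasDerivAt_slice_e (f := Dp P) hdPp).deriv
  -- differentiate symplectic identity in q at 0
  have hs1 := (((hasDerivAt_slice_q (f := Dq Q) hdQq).mul (hasDerivAt_slice_q (f := Dp P) hdPp)).sub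
      ((hasDerivAt_slice_q (f := Dp Q) hdQp).mul (hasDerivAt_slice_q (f := Dq P) hdPq)))
  have hid1 := (hs1.congr_of_eventuallyEq hS1.symm).unique (hasDerivAt_const 0 1)
  rw [← eQqq, ← ePpq, ← eQpq, ← ePqq] at hid1
  simp only [hQq, hPq, hPp] at hid1
  -- hid1 : Dq(DqQ) * 1 + 1 * Dq(DpP) - (Dq(DpQ) * 0 + DpQ0 * Dq(DqP)) = 0
  have hs3 := (((hasDerivAt_slice_e (f := Dq Q) hdQq).mul (hasDerivAt_slice_e (f := Dp P) hdPp)).sub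
      ((hasDerivAt_slice_e (f := Dp Q) hdQp).mul (hasDerivAt_slice_e hdPq)))
  have hid3 := (hs3.congr_of_eventuallyEq hS3.symm).unique (hasDerivAt_const 0 1)
  rw [← eQqe, ← ePpe, ← eQpe, ← ePqe] at hid3
  simp only [hQq, hPq, hPp] at hid3
  -- the trace derivative
  have hT1 : HasDerivAt (fun e => Dq Q (qA e) (pA e) e)
      (deriv qA 0 * Dq (Dq Q) 0 0 0 + deriv pA 0 * Dp (Dq Q) 0 0 0 + De (Dq Q) 0 0 0) 0 := by
    have h := hasDerivAt_curve (f := Dq Q) (x := qA) (y := pA) (t := 0)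
      (by rw [hpt]; exact hdQq) hqA' hpA'
    rwa [hqA0, hpA0] at h
  have hTr := hT1.add hC2
  have hTrd : deriv (fun e => Dq Q (qA e) (pA e) e + Dp P (qA e) (pA e) e) 0
      = (deriv qA 0 * Dq (Dq Q) 0 0 0 + deriv pA 0 * Dp (Dq Q) 0 0 0 + De (Dq Q) 0 0 0)
        + (deriv qA 0 * Dq (Dp P) 0 0 0 + deriv pA 0 * Dp (Dp P) 0 0 0 + De (Dp P) 0 0 0) :=
    hTr.deriv
  rw [hTrd]
  intro h0
  rw [hb] at h0
  set a := deriv qA 0 with ha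
  set α := Dq (Dq P) 0 0 0 with hα
  set β := De (Dq P) 0 0 0 with hβdef
  set g2 := De (De P) 0 0 0 with hg2def
  set c := Dp Q 0 0 0 with hc
  -- clean up the three relations
  have hquad : α * a ^ 2 + 2 * β * a + g2 = 0 := by
    ring_nf at hquad0 ⊢
    linarith [hquad0]
  have h1 : Dq (Dq Q) 0 0 0 + Dq (Dp P) 0 0 0 = c * α := by linarith [hid1]
  have h3 : De (Dq Q) 0 0 0 + De (Dp P) 0 0 0 = c * β := by linarith [hid3]
  have hT0 : c * (a * α + β) = 0 := by
    have : a * (Dq (Dq Q) 0 0 0 + Dq (Dp P) 0 0 0)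
        + (De (Dq Q) 0 0 0 + De (Dp P) 0 0 0) = 0 := by linarith [h0]
    rw [h1, h3] at this
    ring_nf at this ⊢
    linarith [this]
  have haβ : a * α + β = 0 := by
    rcases mul_eq_zero.1 hT0 with h | h
    · exact absurd h hQp
    · exact h
  have hg2 : g2 = α * a ^ 2 := by linear_combination hquad - 2 * a * haβ
  have hβ2 : β = -(a * α) := by linarith
  rw [hg2, hβ2] at hindef
  have : α * (α * a ^ 2) - (-(a * α)) ^ 2 = 0 := by ring
  linarith
end

section
/- Let (Q,P) be a symplectic family with a fixed point at the origin in adapted coordinates, and let (p_B, ε_B) be a B-line. Then P_qqq + 3·P_qε·ε_B''(0) + 3·P_qp·p_B''(0) = 0, all partial derivatives of P being evaluated at the origin. -/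
open Set

def unc (F : ℝ → ℝ → ℝ → ℝ) : ℝ × ℝ × ℝ → ℝ := fun z => F z.1 z.2.1 z.2.2

lemma Dq_eq_fderiv {F : ℝ → ℝ → ℝ → ℝ} {U : Set (ℝ × ℝ × ℝ)} (hU : IsOpen U)
    (hF : ContDiffOn ℝ (⊤ : ℕ∞) (unc F) U) {x y w : ℝ} (hz : (x, y, w) ∈ U) :
    Dq F x y w = fderiv ℝ (unc F) (x, y, w) (1, 0, 0) := by
  have hd : DifferentiableAt ℝ (unc F) (x, y, w) :=
    (hF.contDiffAt (hU.mem_nhds hz)).differentiableAt (by simp)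
  have hc : HasDerivAt (fun s : ℝ => ((s, y, w) : ℝ × ℝ × ℝ)) (1, 0, 0) x :=
    (hasDerivAt_id x).prodMk ((hasDerivAt_const x y).prodMk (hasDerivAt_const x w))
  exact (HasFDerivAt.comp_hasDerivAt x hd.hasFDerivAt hc).deriv

lemma Dp_eq_fderiv {F : ℝ → ℝ → ℝ → ℝ} {U : Set (ℝ × ℝ × ℝ)} (hU : IsOpen U)
    (hF : ContDiffOn ℝ (⊤ : ℕ∞) (unc F) U) {x y w : ℝ} (hz : (x, y, w) ∈ U) :
    Dp F x y w = fderiv ℝ (unc F) (x, y, w) (0, 1, 0) := by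
  have hd : DifferentiableAt ℝ (unc F) (x, y, w) :=
    (hF.contDiffAt (hU.mem_nhds hz)).differentiableAt (by simp)
  have hc : HasDerivAt (fun s : ℝ => ((x, s, w) : ℝ × ℝ × ℝ)) (0, 1, 0) y :=
    (hasDerivAt_const y x).prodMk ((hasDerivAt_id y).prodMk (hasDerivAt_const y w))
  exact (HasFDerivAt.comp_hasDerivAt y hd.hasFDerivAt hc).deriv

lemma De_eq_fderiv {F : ℝ → ℝ → ℝ → ℝ} {U : Set (ℝ × ℝ × ℝ)} (hU : IsOpen U)
    (hF : ContDiffOn ℝ (⊤ : ℕ∞) (unc F) U) {x y w : ℝ} (hz : (x, y, w) ∈ U) :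
    De F x y w = fderiv ℝ (unc F) (x, y, w) (0, 0, 1) := by
  have hd : DifferentiableAt ℝ (unc F) (x, y, w) :=
    (hF.contDiffAt (hU.mem_nhds hz)).differentiableAt (by simp)
  have hc : HasDerivAt (fun s : ℝ => ((x, y, s) : ℝ × ℝ × ℝ)) (0, 0, 1) w :=
    (hasDerivAt_const w x).prodMk ((hasDerivAt_const w y).prodMk (hasDerivAt_id w))
  exact (HasFDerivAt.comp_hasDerivAt w hd.hasFDerivAt hc).deriv

lemma contDiffOn_fderiv_apply {F : ℝ → ℝ → ℝ → ℝ} {U : Set (ℝ × ℝ × ℝ)} (hU : IsOpen U)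
    (hF : ContDiffOn ℝ (⊤ : ℕ∞) (unc F) U) (v : ℝ × ℝ × ℝ) :
    ContDiffOn ℝ (⊤ : ℕ∞) (fun z => fderiv ℝ (unc F) z v) U :=
  (hF.fderiv_of_isOpen hU (by simp)).clm_apply contDiffOn_const

lemma contDiffOn_Dq {F : ℝ → ℝ → ℝ → ℝ} {U : Set (ℝ × ℝ × ℝ)} (hU : IsOpen U)
    (hF : ContDiffOn ℝ (⊤ : ℕ∞) (unc F) U) : ContDiffOn ℝ (⊤ : ℕ∞) (unc (Dq F)) U :=
  (contDiffOn_fderiv_apply hU hF (1, 0, 0)).congr fun z hz => by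
    obtain ⟨x, y, w⟩ := z; exact Dq_eq_fderiv hU hF hz

lemma contDiffOn_Dp {F : ℝ → ℝ → ℝ → ℝ} {U : Set (ℝ × ℝ × ℝ)} (hU : IsOpen U)
    (hF : ContDiffOn ℝ (⊤ : ℕ∞) (unc F) U) : ContDiffOn ℝ (⊤ : ℕ∞) (unc (Dp F)) U :=
  (contDiffOn_fderiv_apply hU hF (0, 1, 0)).congr fun z hz => by
    obtain ⟨x, y, w⟩ := z; exact Dp_eq_fderiv hU hF hz

lemma contDiffOn_De {F : ℝ → ℝ → ℝ → ℝ} {U : Set (ℝ × ℝ × ℝ)} (hU : IsOpen U)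
    (hF : ContDiffOn ℝ (⊤ : ℕ∞) (unc F) U) : ContDiffOn ℝ (⊤ : ℕ∞) (unc (De F)) U :=
  (contDiffOn_fderiv_apply hU hF (0, 0, 1)).congr fun z hz => by
    obtain ⟨x, y, w⟩ := z; exact De_eq_fderiv hU hF hz

lemma chainHasDerivAt {F : ℝ → ℝ → ℝ → ℝ} {U : Set (ℝ × ℝ × ℝ)} (hU : IsOpen U)
    (hF : ContDiffOn ℝ (⊤ : ℕ∞) (unc F) U) {r : ℝ} {pB eB : ℝ → ℝ}
    (hpB : ContDiffOn ℝ (⊤ : ℕ∞) pB (Ioo (-r) r)) (heB : ContDiffOn ℝ (⊤ : ℕ∞) eB (Ioo (-r) r))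
    {q : ℝ} (hq : q ∈ Ioo (-r) r) (hm : (q, pB q, eB q) ∈ U) :
    HasDerivAt (fun t => F t (pB t) (eB t))
      (Dq F q (pB q) (eB q) + Dp F q (pB q) (eB q) * deriv pB q
        + De F q (pB q) (eB q) * deriv eB q) q := by
  have hpd : HasDerivAt pB (deriv pB q) q :=
    ((hpB.differentiableOn (by simp)).differentiableAt (isOpen_Ioo.mem_nhds hq)).hasDerivAt
  have hed : HasDerivAt eB (deriv eB q) q :=
    ((heB.differentiableOn (by simp)).differentiableAt (isOpen_Ioo.mem_nhds hq)).hasDerivAt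
  have hcurve : HasDerivAt (fun t => ((t, pB t, eB t) : ℝ × ℝ × ℝ))
      (1, deriv pB q, deriv eB q) q := (hasDerivAt_id q).prodMk (hpd.prodMk hed)
  have hd : DifferentiableAt ℝ (unc F) (q, pB q, eB q) :=
    (hF.contDiffAt (hU.mem_nhds hm)).differentiableAt (by simp)
  have h := HasFDerivAt.comp_hasDerivAt q hd.hasFDerivAt hcurve
  have hv : ((1 : ℝ), deriv pB q, deriv eB q)
      = ((1 : ℝ), (0 : ℝ), (0 : ℝ)) + deriv pB q • ((0 : ℝ), (1 : ℝ), (0 : ℝ))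
        + deriv eB q • ((0 : ℝ), (0 : ℝ), (1 : ℝ)) := by
    simp [Prod.ext_iff]
  rw [hv, map_add, map_add, map_smul, map_smul, smul_eq_mul, smul_eq_mul] at h
  rw [Dq_eq_fderiv hU hF hm, Dp_eq_fderiv hU hF hm, De_eq_fderiv hU hF hm,
    mul_comm (fderiv ℝ (unc F) (q, pB q, eB q) (0, 1, 0)) (deriv pB q),
    mul_comm (fderiv ℝ (unc F) (q, pB q, eB q) (0, 0, 1)) (deriv eB q)]
  exact h

lemma mixed_symm {F : ℝ → ℝ → ℝ → ℝ} {U : Set (ℝ × ℝ × ℝ)} (hU : IsOpen U)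
    (hF : ContDiffOn ℝ (⊤ : ℕ∞) (unc F) U) {x y w : ℝ} (hz : (x, y, w) ∈ U) :
    Dq (Dp F) x y w = Dp (Dq F) x y w ∧ Dq (De F) x y w = De (Dq F) x y w := by
  set z : ℝ × ℝ × ℝ := (x, y, w) with hzdef
  have hf'c : ContDiffOn ℝ (⊤ : ℕ∞) (fderiv ℝ (unc F)) U := hF.fderiv_of_isOpen hU (by simp)
  have hf''at : HasFDerivAt (fderiv ℝ (unc F)) (fderiv ℝ (fderiv ℝ (unc F)) z) z :=
    ((hf'c.contDiffAt (hU.mem_nhds hz)).differentiableAt (by simp)).hasFDerivAt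
  have hev : ∀ᶠ a in nhds z, HasFDerivAt (unc F) (fderiv ℝ (unc F) a) a := by
    filter_upwards [hU.mem_nhds hz] with a ha
    exact ((hF.contDiffAt (hU.mem_nhds ha)).differentiableAt (by simp)).hasFDerivAt
  have hsym := second_derivative_symmetric_of_eventually hev hf''at
  have key : ∀ v v' : ℝ × ℝ × ℝ, fderiv ℝ (fun a => fderiv ℝ (unc F) a v) z v'
      = fderiv ℝ (fderiv ℝ (unc F)) z v' v := by
    intro v v'
    have happ : HasFDerivAt (fun a => fderiv ℝ (unc F) a v)
        ((ContinuousLinearMap.apply ℝ ℝ v).comp (fderiv ℝ (fderiv ℝ (unc F)) z)) z :=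
      (ContinuousLinearMap.apply ℝ ℝ v).hasFDerivAt.comp z hf''at
    rw [happ.fderiv]; rfl
  have eqq : ∀ v : ℝ × ℝ × ℝ, fderiv ℝ (unc (Dq F)) z = fderiv ℝ (fun a => fderiv ℝ (unc F) a (1,0,0)) z := by
    intro v
    have hevq : unc (Dq F) =ᶠ[nhds z] fun a => fderiv ℝ (unc F) a (1,0,0) := by
      filter_upwards [hU.mem_nhds hz] with a ha
      obtain ⟨a1, a2, a3⟩ := a; exact Dq_eq_fderiv hU hF ha
    exact hevq.fderiv_eq
  have eqp : fderiv ℝ (unc (Dp F)) z = fderiv ℝ (fun a => fderiv ℝ (unc F) a (0,1,0)) z := by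
    have hevp : unc (Dp F) =ᶠ[nhds z] fun a => fderiv ℝ (unc F) a (0,1,0) := by
      filter_upwards [hU.mem_nhds hz] with a ha
      obtain ⟨a1, a2, a3⟩ := a; exact Dp_eq_fderiv hU hF ha
    exact hevp.fderiv_eq
  have eqe : fderiv ℝ (unc (De F)) z = fderiv ℝ (fun a => fderiv ℝ (unc F) a (0,0,1)) z := by
    have heve : unc (De F) =ᶠ[nhds z] fun a => fderiv ℝ (unc F) a (0,0,1) := by
      filter_upwards [hU.mem_nhds hz] with a ha
      obtain ⟨a1, a2, a3⟩ := a; exact De_eq_fderiv hU hF ha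
    exact heve.fderiv_eq
  constructor
  · rw [Dq_eq_fderiv hU (contDiffOn_Dp hU hF) hz, Dp_eq_fderiv hU (contDiffOn_Dq hU hF) hz,
      eqq (0,1,0), eqp, key, key, hsym]
  · rw [Dq_eq_fderiv hU (contDiffOn_De hU hF) hz, De_eq_fderiv hU (contDiffOn_Dq hU hF) hz,
      eqq (0,0,1), eqe, key, key, hsym]

/-- Along a `B`-line of a symplectic family in adapted coordinates one has
`P_qqq + 3·P_qε·ε_B''(0) + 3·P_qp·p_B''(0) = 0` (partial derivatives of `P` at the
origin). -/
theorem B_line_third_derivative_relation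
    (Q P : ℝ → ℝ → ℝ → ℝ) (U : Set (ℝ × ℝ × ℝ)) (hU : IsOpen U) (hU0 : (0, 0, 0) ∈ U)
    (hQ : ContDiffOn ℝ (⊤ : ℕ∞) (fun z : ℝ × ℝ × ℝ => Q z.1 z.2.1 z.2.2) U)
    (hP : ContDiffOn ℝ (⊤ : ℕ∞) (fun z : ℝ × ℝ × ℝ => P z.1 z.2.1 z.2.2) U)
    (hsymp : ∀ z ∈ U, Dq Q z.1 z.2.1 z.2.2 * Dp P z.1 z.2.1 z.2.2
      - Dp Q z.1 z.2.1 z.2.2 * Dq P z.1 z.2.1 z.2.2 = 1)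
    (hQ0 : Q 0 0 0 = 0) (hP0 : P 0 0 0 = 0)
    (hQq : Dq Q 0 0 0 = 1) (hPq : Dq P 0 0 0 = 0) (hPp : Dp P 0 0 0 = 1)
    (hQe : De Q 0 0 0 = 0) (hPe : De P 0 0 0 = 0) (hQp : Dp Q 0 0 0 ≠ 0)
    (r : ℝ) (hr : 0 < r) (pB eB : ℝ → ℝ)
    (hpB : ContDiffOn ℝ (⊤ : ℕ∞) pB (Set.Ioo (-r) r)) (heB : ContDiffOn ℝ (⊤ : ℕ∞) eB (Set.Ioo (-r) r))
    (hpB0 : pB 0 = 0) (heB0 : eB 0 = 0)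
    (hpB1 : deriv pB 0 = 0) (heB1 : deriv eB 0 = 0)
    (hfixB : ∀ q ∈ Set.Ioo (-r) r,
      Q q (pB q) (eB q) = q ∧ P q (pB q) (eB q) = pB q) :
    Dq (Dq (Dq P)) 0 0 0 + 3 * De (Dq P) 0 0 0 * deriv (deriv eB) 0
      + 3 * Dp (Dq P) 0 0 0 * deriv (deriv pB) 0 = 0 := by
  have hP' : ContDiffOn ℝ (⊤ : ℕ∞) (unc P) U := hP
  set s : Set ℝ := Ioo (-r) r ∩ (fun t => ((t, pB t, eB t) : ℝ × ℝ × ℝ)) ⁻¹' U with hsdef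
  have hsopen : IsOpen s :=
    (continuousOn_id.prodMk (hpB.continuousOn.prodMk heB.continuousOn)).isOpen_inter_preimage
      isOpen_Ioo hU
  have h0Ioo : (0 : ℝ) ∈ Ioo (-r) r := ⟨neg_lt_zero.2 hr, hr⟩
  have h0s : (0 : ℝ) ∈ s := ⟨h0Ioo, by simp only [Set.mem_preimage, hpB0, heB0]; exact hU0⟩
  -- smoothness of partial derivatives
  have hF1 : ContDiffOn ℝ (⊤ : ℕ∞) (unc (Dq P)) U := contDiffOn_Dq hU hP'
  have hF2 : ContDiffOn ℝ (⊤ : ℕ∞) (unc (Dp P)) U := contDiffOn_Dp hU hP'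
  have hF3 : ContDiffOn ℝ (⊤ : ℕ∞) (unc (De P)) U := contDiffOn_De hU hP'
  have hG11 := contDiffOn_Dq hU hF1
  have hG12 := contDiffOn_Dp hU hF1
  have hG13 := contDiffOn_De hU hF1
  have hG21 := contDiffOn_Dq hU hF2
  have hG22 := contDiffOn_Dp hU hF2
  have hG23 := contDiffOn_De hU hF2
  have hG31 := contDiffOn_Dq hU hF3
  have hG32 := contDiffOn_Dp hU hF3
  have hG33 := contDiffOn_De hU hF3
  -- smoothness of derivatives of pB, eB
  have hpB' : ContDiffOn ℝ (⊤ : ℕ∞) (deriv pB) (Ioo (-r) r) := hpB.deriv_of_isOpen isOpen_Ioo (by simp)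
  have heB' : ContDiffOn ℝ (⊤ : ℕ∞) (deriv eB) (Ioo (-r) r) := heB.deriv_of_isOpen isOpen_Ioo (by simp)
  have hpB'' : ContDiffOn ℝ (⊤ : ℕ∞) (deriv (deriv pB)) (Ioo (-r) r) :=
    hpB'.deriv_of_isOpen isOpen_Ioo (by simp)
  have heB'' : ContDiffOn ℝ (⊤ : ℕ∞) (deriv (deriv eB)) (Ioo (-r) r) :=
    heB'.deriv_of_isOpen isOpen_Ioo (by simp)
  have hp1 : ∀ q ∈ Ioo (-r) r, HasDerivAt (deriv pB) (deriv (deriv pB) q) q := fun q hq =>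
    ((hpB'.differentiableOn (by simp)).differentiableAt (isOpen_Ioo.mem_nhds hq)).hasDerivAt
  have he1 : ∀ q ∈ Ioo (-r) r, HasDerivAt (deriv eB) (deriv (deriv eB) q) q := fun q hq =>
    ((heB'.differentiableOn (by simp)).differentiableAt (isOpen_Ioo.mem_nhds hq)).hasDerivAt
  have hp2 : HasDerivAt (deriv (deriv pB)) (deriv (deriv (deriv pB)) 0) 0 :=
    ((hpB''.differentiableOn (by simp)).differentiableAt (isOpen_Ioo.mem_nhds h0Ioo)).hasDerivAt
  have he2 : HasDerivAt (deriv (deriv eB)) (deriv (deriv (deriv eB)) 0) 0 :=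
    ((heB''.differentiableOn (by simp)).differentiableAt (isOpen_Ioo.mem_nhds h0Ioo)).hasDerivAt
  -- Stage 1
  have h1 : ∀ q ∈ s, Dq P q (pB q) (eB q) + Dp P q (pB q) (eB q) * deriv pB q
      + De P q (pB q) (eB q) * deriv eB q = deriv pB q := by
    intro q hq
    have hA := chainHasDerivAt hU hP' hpB heB hq.1 hq.2
    have hev : pB =ᶠ[nhds q] fun t => P t (pB t) (eB t) :=
      Filter.eventuallyEq_of_mem (hsopen.mem_nhds hq) fun t ht => ((hfixB t ht.1).2).symm
    exact ((hA.congr_of_eventuallyEq hev).deriv).symm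
  -- Stage 2
  have h2 : ∀ q ∈ s,
      (Dq (Dq P) q (pB q) (eB q) + Dp (Dq P) q (pB q) (eB q) * deriv pB q
          + De (Dq P) q (pB q) (eB q) * deriv eB q)
        + ((Dq (Dp P) q (pB q) (eB q) + Dp (Dp P) q (pB q) (eB q) * deriv pB q
            + De (Dp P) q (pB q) (eB q) * deriv eB q) * deriv pB q
          + Dp P q (pB q) (eB q) * deriv (deriv pB) q)
        + ((Dq (De P) q (pB q) (eB q) + Dp (De P) q (pB q) (eB q) * deriv pB q
            + De (De P) q (pB q) (eB q) * deriv eB q) * deriv eB q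
          + De P q (pB q) (eB q) * deriv (deriv eB) q)
        = deriv (deriv pB) q := by
    intro q hq
    have ha1 := chainHasDerivAt hU hF1 hpB heB hq.1 hq.2
    have ha2 := chainHasDerivAt hU hF2 hpB heB hq.1 hq.2
    have ha3 := chainHasDerivAt hU hF3 hpB heB hq.1 hq.2
    have hL := (ha1.add (ha2.mul (hp1 q hq.1))).add (ha3.mul (he1 q hq.1))
    have hev : deriv pB =ᶠ[nhds q]
        (fun t => Dq P t (pB t) (eB t) + Dp P t (pB t) (eB t) * deriv pB t
          + De P t (pB t) (eB t) * deriv eB t) :=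
      Filter.eventuallyEq_of_mem (hsopen.mem_nhds hq) fun t ht => (h1 t ht).symm
    exact ((hL.congr_of_eventuallyEq hev).deriv).symm
  -- Stage 3: differentiate the stage-2 identity at 0
  have hb11 := chainHasDerivAt hU hG11 hpB heB h0Ioo h0s.2
  have hb12 := chainHasDerivAt hU hG12 hpB heB h0Ioo h0s.2
  have hb13 := chainHasDerivAt hU hG13 hpB heB h0Ioo h0s.2
  have hb21 := chainHasDerivAt hU hG21 hpB heB h0Ioo h0s.2
  have hb22 := chainHasDerivAt hU hG22 hpB heB h0Ioo h0s.2
  have hb23 := chainHasDerivAt hU hG23 hpB heB h0Ioo h0s.2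
  have hb31 := chainHasDerivAt hU hG31 hpB heB h0Ioo h0s.2
  have hb32 := chainHasDerivAt hU hG32 hpB heB h0Ioo h0s.2
  have hb33 := chainHasDerivAt hU hG33 hpB heB h0Ioo h0s.2
  have ha2z := chainHasDerivAt hU hF2 hpB heB h0Ioo h0s.2
  have ha3z := chainHasDerivAt hU hF3 hpB heB h0Ioo h0s.2
  have hp1z := hp1 0 h0Ioo
  have he1z := he1 0 h0Ioo
  have hd1 := (hb11.add (hb12.mul hp1z)).add (hb13.mul he1z)
  have hd2 := (hb21.add (hb22.mul hp1z)).add (hb23.mul he1z)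
  have hd3 := (hb31.add (hb32.mul hp1z)).add (hb33.mul he1z)
  have hLam := (hd1.add ((hd2.mul hp1z).add (ha2z.mul hp2))).add
    ((hd3.mul he1z).add (ha3z.mul he2))
  have hev3 : deriv (deriv pB) =ᶠ[nhds 0]
      (fun t => (Dq (Dq P) t (pB t) (eB t) + Dp (Dq P) t (pB t) (eB t) * deriv pB t
          + De (Dq P) t (pB t) (eB t) * deriv eB t)
        + ((Dq (Dp P) t (pB t) (eB t) + Dp (Dp P) t (pB t) (eB t) * deriv pB t
            + De (Dp P) t (pB t) (eB t) * deriv eB t) * deriv pB t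
          + Dp P t (pB t) (eB t) * deriv (deriv pB) t)
        + ((Dq (De P) t (pB t) (eB t) + Dp (De P) t (pB t) (eB t) * deriv pB t
            + De (De P) t (pB t) (eB t) * deriv eB t) * deriv eB t
          + De P t (pB t) (eB t) * deriv (deriv eB) t)) :=
    Filter.eventuallyEq_of_mem (hsopen.mem_nhds h0s) fun t ht => (h2 t ht).symm
  have hX := ((hLam.congr_of_eventuallyEq hev3).deriv).symm
  simp only [Pi.add_apply, Pi.mul_apply] at hX
  rw [hpB0, heB0] at hX
  rw [hpB1, heB1, hPp, hPe] at hX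
  obtain ⟨hs1, hs2⟩ := mixed_symm hU hP' hU0
  rw [hs1, hs2] at hX
  linear_combination hX
end
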